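/- arXiv:2101.04698 — 8 statements merged into one kernel-verified Lean document; each statement's English description precedes it below -/
import Mathlib

section
/- Let H be an n-vertex linear hypergraph and let t := e(H) − n. If e_1, …, e_{2t} ∈ E(H) are distinct pairwise intersecting edges such that {e_{2i−1}, e_{2i}} is a useful pair for each i ∈ [t], then H has a proper edge-colouring with n colours in which each colour is assigned to at most two edges. -/
open Finset
open scoped Classical

/-- A hypergraph on vertex set `Fin n` is *linear* if any two distinct edges intersect in at
most one vertex. -/
def LinearHG {n : ℕ} (H : Finset (Finset (Fin n))) : Prop :=
  ∀ e ∈ H, ∀ f ∈ H, e ≠ f → (e ∩ f).card ≤ 1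

/-- `φ` is a proper edge-colouring of the hypergraph `H`. -/
def IsProperEC {n : ℕ} (H : Finset (Finset (Fin n))) (φ : Finset (Fin n) → ℕ) : Prop :=
  ∀ e ∈ H, ∀ f ∈ H, e ≠ f → (e ∩ f).Nonempty → φ e ≠ φ f

/-- Each colour is assigned to at most two edges of `H` by `φ`. -/
def ColoursUsedAtMostTwice {n : ℕ} (H : Finset (Finset (Fin n)))
    (φ : Finset (Fin n) → ℕ) : Prop :=
  ∀ c : ℕ, (H.filter fun e => φ e = c).card ≤ 2

/-- The set `N(e) ∩ N(f)` of edges of `H` intersecting both `e` and `f` (other than `e`, `f`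
themselves). -/
def CommonNbrs {n : ℕ} (H : Finset (Finset (Fin n))) (e f : Finset (Fin n)) :
    Finset (Finset (Fin n)) :=
  H.filter fun g => g ≠ e ∧ (g ∩ e).Nonempty ∧ g ≠ f ∧ (g ∩ f).Nonempty

/-- A pair of edges `{e, f}` of an `n`-vertex hypergraph is *useful* if `e ≠ f`,
`e ∩ f ≠ ∅`, and `|N(e) ∩ N(f)| ≤ n - 2`. -/
def Useful {n : ℕ} (H : Finset (Finset (Fin n))) (e f : Finset (Fin n)) : Prop :=
  e ≠ f ∧ (e ∩ f).Nonempty ∧ ((CommonNbrs H e f).card : ℤ) ≤ (n : ℤ) - 2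


/-!
Let `t = e(H) - n`. An edge meeting both edges of a useful pair `{e, f}` is a common
neighbour, so at least `e(H) - 2 - (n - 2) = t` edges miss `e` or `f`, and none of them is
one of the pairwise intersecting `eᵢ`. Hall's theorem picks distinct such edges `g₁, …, g_t`,
one for each pair, with `gᵢ` disjoint from an edge `rᵢ` of the `i`-th pair. Giving `rᵢ` the
colour of `gᵢ` and every other edge a colour of its own uses `e(H) - t = n` colours.
-/

theorem Finset.exists_injOn_lt_card {α : Type*} (s : Finset α) :
    ∃ c : α → ℕ, (∀ x ∈ s, c x < s.card) ∧ Set.InjOn c s := by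
  refine ⟨fun x => if hx : x ∈ s then s.equivFin ⟨x, hx⟩ else 0, fun x hx => ?_, ?_⟩
  · simp [hx]
  · intro x hx y hy hxy
    rw [Finset.mem_coe] at hx hy
    simp only [dif_pos hx, dif_pos hy, Fin.val_inj] at hxy
    simpa using s.equivFin.injective hxy

theorem exists_injective_mem_of_card_le {ι α : Type*} [Fintype ι] [DecidableEq α]
    (C : ι → Finset α) (hC : ∀ i, Fintype.card ι ≤ (C i).card) :
    ∃ g : ι → α, Function.Injective g ∧ ∀ i, g i ∈ C i := by
  refine (Finset.all_card_le_biUnion_card_iff_exists_injective C).mp fun s => ?_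
  obtain rfl | ⟨i, hi⟩ := s.eq_empty_or_nonempty
  · simp
  · calc s.card ≤ Fintype.card ι := card_le_univ s
      _ ≤ (C i).card := hC i
      _ ≤ (s.biUnion C).card := card_le_card (subset_biUnion_of_mem C hi)

section Retraction

open Function

variable {ι α : Type*} {u v : ι → α}

theorem eq_or_exists_of_extend_id_eq (hu : Injective u) (hv : Injective v) {e f : α}
    (h : extend v u id e = extend v u id f) :
    e = f ∨ ∃ i, (e = u i ∧ f = v i) ∨ (e = v i ∧ f = u i) := by
  by_cases he : ∃ i, v i = e <;> by_cases hf : ∃ j, v j = f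
  · obtain ⟨i, rfl⟩ := he
    obtain ⟨j, rfl⟩ := hf
    rw [hv.extend_apply, hv.extend_apply] at h
    exact Or.inl (congrArg v (hu h))
  · obtain ⟨i, rfl⟩ := he
    rw [hv.extend_apply, extend_apply' _ _ _ hf] at h
    exact Or.inr ⟨i, Or.inr ⟨rfl, h.symm⟩⟩
  · obtain ⟨j, rfl⟩ := hf
    rw [hv.extend_apply, extend_apply' _ _ _ he] at h
    exact Or.inr ⟨j, Or.inl ⟨h, rfl⟩⟩
  · rw [extend_apply' _ _ _ he, extend_apply' _ _ _ hf] at h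
    exact Or.inl h

theorem extend_id_notMem_range (hv : Injective v) (huv : ∀ i j, u i ≠ v j) (e : α) :
    extend v u id e ∉ Set.range v := by
  rintro ⟨j, hj⟩
  by_cases he : ∃ i, v i = e
  · obtain ⟨i, rfl⟩ := he
    rw [hv.extend_apply] at hj
    exact huv i j hj.symm
  · rw [extend_apply' _ _ _ he] at hj
    exact he ⟨j, hj⟩

theorem extend_id_mem (hv : Injective v) {S : Set α} (hu : ∀ i, u i ∈ S) {e : α}
    (he : e ∈ S) : extend v u id e ∈ S := by
  by_cases hev : ∃ i, v i = e
  · obtain ⟨i, rfl⟩ := hev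
    rw [hv.extend_apply]
    exact hu i
  · rwa [extend_apply' _ _ _ hev]

theorem card_le_two_of_extend_id_eq (hu : Injective u) (hv : Injective v)
    (huv : ∀ i j, u i ≠ v j) (S : Finset α)
    (hS : ∀ e ∈ S, ∀ f ∈ S, extend v u id e = extend v u id f) : S.card ≤ 2 := by
  by_contra! h
  obtain ⟨x, hx, y, hy, z, hz, hxy, hxz, hyz⟩ := Finset.two_lt_card.mp h
  obtain rfl | ⟨i, ⟨rfl, rfl⟩ | ⟨rfl, rfl⟩⟩ := eq_or_exists_of_extend_id_eq hu hv (hS x hx y hy)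
  · exact hxy rfl
  all_goals
    obtain rfl | ⟨j, ⟨hj, rfl⟩ | ⟨hj, rfl⟩⟩ := eq_or_exists_of_extend_id_eq hu hv (hS _ hx z hz)
  · exact hxz rfl
  · exact hyz (congrArg v (hu hj))
  · exact huv _ _ hj
  · exact hxz rfl
  · exact huv _ _ hj.symm
  · exact hyz (congrArg u (hv hj))

end Retraction

theorem exists_colouring_of_disjoint_pairs {n k : ℕ} {ι : Type*} [Fintype ι]
    (H : Finset (Finset (Fin n))) (u v : ι → Finset (Fin n)) (hu : ∀ i, u i ∈ H)
    (hv : ∀ i, v i ∈ H) (hu_inj : Function.Injective u) (hv_inj : Function.Injective v)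
    (huv : ∀ i j, u i ≠ v j) (hdisj : ∀ i, Disjoint (u i) (v i))
    (hcard : H.card ≤ k + Fintype.card ι) :
    ∃ φ : Finset (Fin n) → ℕ,
      (∀ e ∈ H, φ e < k) ∧ IsProperEC H φ ∧ ColoursUsedAtMostTwice H φ := by
  -- `ρ` sends `v i` to `u i` and fixes every other edge; the colour classes are its fibres.
  set ρ := Function.extend v u id
  set H' := H \ univ.image v
  have hH'_card : H'.card ≤ k := by
    have hsub : univ.image v ⊆ H := image_subset_iff.mpr fun i _ => hv i
    rw [card_sdiff_of_subset hsub, card_image_of_injective _ hv_inj, card_univ]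
    omega
  have hρ_mem : ∀ e ∈ H, ρ e ∈ H' := by
    intro e he
    refine mem_sdiff.mpr ⟨extend_id_mem hv_inj (S := H) hu he, fun h => ?_⟩
    exact extend_id_notMem_range hv_inj huv e (by simpa using h)
  obtain ⟨c, hc_lt, hc_inj⟩ := H'.exists_injOn_lt_card
  have hρ_eq : ∀ e ∈ H, ∀ f ∈ H, c (ρ e) = c (ρ f) → ρ e = ρ f :=
    fun e he f hf h => hc_inj (hρ_mem e he) (hρ_mem f hf) h
  refine ⟨c ∘ ρ, fun e he => (hc_lt _ (hρ_mem e he)).trans_le hH'_card, ?_, fun col => ?_⟩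
  · intro e he f hf hef hmeet hcol
    obtain rfl | ⟨i, ⟨rfl, rfl⟩ | ⟨rfl, rfl⟩⟩ :=
      eq_or_exists_of_extend_id_eq hu_inj hv_inj (hρ_eq e he f hf hcol)
    · exact hef rfl
    · exact not_disjoint_iff_nonempty_inter.mpr hmeet (hdisj i)
    · exact not_disjoint_iff_nonempty_inter.mpr hmeet (hdisj i).symm
  · refine card_le_two_of_extend_id_eq hu_inj hv_inj huv _ fun e he f hf => ?_
    rw [mem_filter] at he hf
    exact hρ_eq e he.1 f hf.1 (he.2.trans hf.2.symm)

theorem card_le_two_add_card_commonNbrs_add_card_disjoint {n : ℕ}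
    (H : Finset (Finset (Fin n))) (e f : Finset (Fin n)) :
    H.card ≤ 2 + (CommonNbrs H e f).card +
      (H.filter fun g => Disjoint g e ∨ Disjoint g f).card := by
  have hcover : H ⊆ insert e (insert f
      (CommonNbrs H e f ∪ H.filter fun g => Disjoint g e ∨ Disjoint g f)) := by
    intro g hg
    simp only [mem_insert, mem_union, mem_filter, CommonNbrs, ← not_disjoint_iff_nonempty_inter]
    tauto
  have hbound := (card_le_card hcover).trans <| (card_insert_le _ _).trans <|
    Nat.succ_le_succ <| (card_insert_le _ _).trans <| Nat.succ_le_succ (card_union_le _ _)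
  omega

theorem Useful.card_sub_le_card_disjoint {n : ℕ} {H : Finset (Finset (Fin n))}
    {e f : Finset (Fin n)} (huse : Useful H e f) :
    H.card - n ≤ (H.filter fun g => Disjoint g e ∨ Disjoint g f).card := by
  have := card_le_two_add_card_commonNbrs_add_card_disjoint H e f
  have := huse.2.2
  omega

theorem exists_colouring_of_useful_pairs {n : ℕ} {ι : Type*} [Fintype ι]
    (H : Finset (Finset (Fin n))) (p : ι ⊕ ι → Finset (Fin n)) (hmem : ∀ s, p s ∈ H)
    (hinj : Function.Injective p) (hint : Pairwise fun s s' => (p s ∩ p s').Nonempty)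
    (huse : ∀ i, Useful H (p (.inl i)) (p (.inr i))) (hcard : Fintype.card ι = H.card - n) :
    ∃ φ : Finset (Fin n) → ℕ,
      (∀ e ∈ H, φ e < n) ∧ IsProperEC H φ ∧ ColoursUsedAtMostTwice H φ := by
  have hmeet : ∀ s s', ¬Disjoint (p s) (p s') := by
    intro s s'
    rw [not_disjoint_iff_nonempty_inter]
    by_cases hss' : s = s'
    · subst hss'
      rw [inter_self]
      cases s with
      | inl i => exact (huse i).2.1.mono inter_subset_left
      | inr i => exact (huse i).2.1.mono inter_subset_right
    · exact hint hss'
  obtain ⟨u, hu_inj, hu⟩ := exists_injective_mem_of_card_le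
    (fun i => H.filter fun g => Disjoint g (p (.inl i)) ∨ Disjoint g (p (.inr i)))
    (fun i => hcard ▸ (huse i).card_sub_le_card_disjoint)
  simp only [mem_filter] at hu
  let side : ι → ι ⊕ ι := fun i => if Disjoint (u i) (p (.inl i)) then .inl i else .inr i
  have hside_inj : Function.Injective side := by
    refine Function.LeftInverse.injective (g := Sum.elim id id) fun i => ?_
    dsimp only [side]
    split_ifs <;> rfl
  refine exists_colouring_of_disjoint_pairs H u (p ∘ side) (fun i => (hu i).1)
    (fun i => hmem _) hu_inj (hinj.comp hside_inj) (fun i j h => ?_) (fun i => ?_) (by omega)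
  · obtain h' | h' := (hu i).2 <;> exact hmeet _ _ (h ▸ h')
  · dsimp only [side, Function.comp]
    split_ifs with h
    · exact h
    · exact (hu i).2.resolve_left h

/-- If `H` is an `n`-vertex linear hypergraph and `e₁, …, e₂ₜ` (with `t = e(H) - n`) are
distinct pairwise intersecting edges such that `{e₍₂ᵢ₋₁₎, e₍₂ᵢ₎}` is a useful pair for each
`i`, then `H` has a proper edge-colouring with `n` colours in which each colour is used at
most twice. -/
theorem colouring_from_useful_pairs
    (n : ℕ) (H : Finset (Finset (Fin n)))
    (es : Fin (2 * (H.card - n)) → Finset (Fin n))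
    (hmem : ∀ i, es i ∈ H)
    (hinj : Function.Injective es)
    (hint : ∀ i j, i ≠ j → (es i ∩ es j).Nonempty)
    (huse : ∀ i : Fin (H.card - n),
      Useful H (es ⟨2 * i.val, by omega⟩) (es ⟨2 * i.val + 1, by omega⟩)) :
    ∃ φ : Finset (Fin n) → ℕ,
      (∀ e ∈ H, φ e < n) ∧ IsProperEC H φ ∧ ColoursUsedAtMostTwice H φ := by
  let pairIndex : Fin (H.card - n) ⊕ Fin (H.card - n) → Fin (2 * (H.card - n)) :=
    Sum.elim (fun i => ⟨2 * i.val, by omega⟩) (fun i => ⟨2 * i.val + 1, by omega⟩)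
  have hpairIndex : Function.Injective pairIndex := by
    rintro (i | i) (j | j) h <;> simp [pairIndex, Fin.ext_iff] at h ⊢ <;> omega
  exact exists_colouring_of_useful_pairs H (es ∘ pairIndex) (fun _ => hmem _)
    (hinj.comp hpairIndex) (Pairwise.comp_of_injective hint hpairIndex) huse (Fintype.card_fin _)
end

section
/- Let H be an n-vertex linear hypergraph and let {A, B} be a partition of its edge set such that |A| + |B| − n ≤ |A|/4. If for every pair of distinct intersecting edges e, f ∈ A the pair {e, f} is useful, then H has a proper edge-colouring with n colours in which each colour is assigned to at most two edges. -/
/-!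
Join two edges of `H` when they are disjoint. A matching `M` of this graph gives a colouring as
required with `|H| - |M|` colours (one per matched pair, one per unmatched edge), so it suffices
to find a matching with `|H| - n ≤ |M|`. Take `M` maximum and suppose `|M| < |H| - n`. Then the
unmatched edges pairwise intersect, and no block `{x, y}` of `M` has `x` disjoint from one
unmatched edge and `y` from another. For unmatched `u ≠ v` in `A`, usefulness leaves more than
`|M|` edges disjoint from `u` or from `v`; they are all matched, so some block is disjoint from
`u` on both ends or from `v` on both ends. Hence all but at most one unmatched edge of `A` is
disjoint from a whole block, distinct such edges need distinct blocks, and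
`|A| ≤ 2|M| + |M| + 1`, contradicting `4 (|H| - n) ≤ |A|`.
-/

open Finset
open scoped Classical

namespace SimpleGraph

variable {V : Type*} {G : SimpleGraph V} {H : Finset V} {M : Finset (Finset V)} {b : Finset V}
  {u v x y : V}

structure IsMatchingIn (G : SimpleGraph V) (H : Finset V) (M : Finset (Finset V)) : Prop where
  subset : ∀ b ∈ M, b ⊆ H
  isNClique : ∀ b ∈ M, G.IsNClique 2 b
  pairwiseDisjoint : (M : Set (Finset V)).PairwiseDisjoint id

def IsMaximumMatchingIn (G : SimpleGraph V) (H : Finset V) (M : Finset (Finset V)) : Prop :=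
  G.IsMatchingIn H M ∧ ∀ N, G.IsMatchingIn H N → N.card ≤ M.card

lemma isNClique_pair (h : G.Adj u v) : G.IsNClique 2 {u, v} :=
  ⟨by rw [coe_pair]; exact isClique_pair.2 fun _ => h, card_pair h.ne⟩

lemma IsNClique.eq_pair (h : G.IsNClique 2 b) (hx : x ∈ b) (hy : y ∈ b) (hxy : x ≠ y) :
    b = {x, y} :=
  (eq_of_subset_of_card_le (by simp [insert_subset_iff, hx, hy])
    (by rw [h.card_eq, card_pair hxy])).symm

namespace IsMatchingIn

lemma biUnion_subset (hM : G.IsMatchingIn H M) : M.biUnion id ⊆ H :=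
  Finset.biUnion_subset.2 hM.subset

lemma card_biUnion (hM : G.IsMatchingIn H M) : (M.biUnion id).card = 2 * M.card := by
  rw [Finset.card_biUnion hM.pairwiseDisjoint, mul_comm]
  exact sum_const_nat fun b hb => (hM.isNClique b hb).card_eq

lemma mono {N : Finset (Finset V)} (hM : G.IsMatchingIn H M) (hNM : N ⊆ M) :
    G.IsMatchingIn H N :=
  ⟨fun b hb => hM.subset b (hNM hb), fun b hb => hM.isNClique b (hNM hb),
    hM.pairwiseDisjoint.subset (coe_subset.2 hNM)⟩

lemma insert_of_disjoint (hM : G.IsMatchingIn H M) (hbH : b ⊆ H) (hb : G.IsNClique 2 b)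
    (hbM : Disjoint b (M.biUnion id)) : G.IsMatchingIn H (insert b M) := by
  refine ⟨?_, ?_, ?_⟩
  · simpa only [forall_mem_insert] using ⟨hbH, hM.subset⟩
  · simpa only [forall_mem_insert] using ⟨hb, hM.isNClique⟩
  · rw [coe_insert]
    exact hM.pairwiseDisjoint.insert fun c hc _ => hbM.mono_right (subset_biUnion_of_mem id hc)

lemma card_insert_of_disjoint (hb : G.IsNClique 2 b) (hbM : Disjoint b (M.biUnion id)) :
    (insert b M).card = M.card + 1 := by
  refine card_insert_of_notMem fun hbM' => ?_
  have hb0 : b = ∅ := disjoint_self.1 (hbM.mono_right (subset_biUnion_of_mem id hbM'))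
  simpa [hb0] using hb.card_eq

lemma notMem_biUnion_erase (hM : G.IsMatchingIn H M) (hb : b ∈ M) (hx : x ∈ b) :
    x ∉ (M.erase b).biUnion id := by
  simp only [mem_biUnion, mem_erase, id]
  rintro ⟨c, ⟨hcb, hc⟩, hxc⟩
  exact Finset.disjoint_left.1 (hM.pairwiseDisjoint hb hc hcb.symm) hx hxc

end IsMatchingIn

lemma exists_isMaximumMatchingIn (G : SimpleGraph V) (H : Finset V) :
    ∃ M, G.IsMaximumMatchingIn H M := by
  have hmatch : ∀ {N}, G.IsMatchingIn H N →
      N ∈ (H.powerset.powerset).filter (G.IsMatchingIn H) :=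
    fun hN => mem_filter.2 ⟨mem_powerset.2 fun b hb => mem_powerset.2 (hN.subset b hb), hN⟩
  have hempty : G.IsMatchingIn H ∅ := ⟨by simp, by simp, by simp⟩
  obtain ⟨M, hM, hmax⟩ := exists_max_image _ card ⟨∅, hmatch hempty⟩
  exact ⟨M, (mem_filter.1 hM).2, fun N hN => hmax N (hmatch hN)⟩

namespace IsMaximumMatchingIn

lemma not_adj (hM : G.IsMaximumMatchingIn H M) (hu : u ∈ H \ M.biUnion id)
    (hv : v ∈ H \ M.biUnion id) : ¬G.Adj u v := by
  rw [mem_sdiff] at hu hv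
  intro huv
  have hdisj : Disjoint {u, v} (M.biUnion id) := by simp [hu.2, hv.2]
  have hN := hM.2 _ (hM.1.insert_of_disjoint (by simp [insert_subset_iff, hu.1, hv.1])
    (isNClique_pair huv) hdisj)
  rw [IsMatchingIn.card_insert_of_disjoint (isNClique_pair huv) hdisj] at hN
  omega

/-- Otherwise replacing the block `{x, y}` by `{x, u}` and `{y, v}` would enlarge `M`. -/
lemma not_adj_and_adj (hM : G.IsMaximumMatchingIn H M) (hb : b ∈ M) (hx : x ∈ b) (hy : y ∈ b)
    (hxy : x ≠ y) (hu : u ∈ H \ M.biUnion id) (hv : v ∈ H \ M.biUnion id) (huv : u ≠ v)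
    (hxu : G.Adj x u) (hyv : G.Adj y v) : False := by
  rw [mem_sdiff] at hu hv
  have hxM : x ∈ M.biUnion id := mem_biUnion.2 ⟨b, hb, hx⟩
  have hyM : y ∈ M.biUnion id := mem_biUnion.2 ⟨b, hb, hy⟩
  have hbH := hM.1.subset b hb
  have hsub : (M.erase b).biUnion id ⊆ M.biUnion id :=
    biUnion_subset_biUnion_of_subset_left _ (erase_subset b M)
  have hx' := hM.1.notMem_biUnion_erase hb hx
  have hy' := hM.1.notMem_biUnion_erase hb hy
  have hu' : u ∉ (M.erase b).biUnion id := fun h => hu.2 (hsub h)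
  have hv' : v ∉ (M.erase b).biUnion id := fun h => hv.2 (hsub h)
  have hdyv : Disjoint {y, v} ((M.erase b).biUnion id) := by simp [hy', hv']
  have hdxu : Disjoint {x, u} ((insert {y, v} (M.erase b)).biUnion id) := by
    have hvx : v ≠ x := fun h => hv.2 (h ▸ hxM)
    have hyu : y ≠ u := fun h => hu.2 (h ▸ hyM)
    simp [hx', hu', hxy.symm, hvx, hyu, huv.symm]
  have hN := hM.2 _ (((hM.1.mono (erase_subset b M)).insert_of_disjoint
    (by simp [insert_subset_iff, hbH hy, hv.1]) (isNClique_pair hyv) hdyv).insert_of_disjoint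
    (by simp [insert_subset_iff, hbH hx, hu.1]) (isNClique_pair hxu) hdxu)
  rw [IsMatchingIn.card_insert_of_disjoint (isNClique_pair hxu) hdxu,
    IsMatchingIn.card_insert_of_disjoint (isNClique_pair hyv) hdyv, card_erase_of_mem hb] at hN
  have := card_pos.2 ⟨b, hb⟩
  omega

lemma exists_block_forall_adj (hM : G.IsMaximumMatchingIn H M) {n : ℕ}
    (hMH : n + M.card < H.card)
    (hu : u ∈ H \ M.biUnion id) (hv : v ∈ H \ M.biUnion id) (huv : u ≠ v)
    (hcommon : #(H.filter fun g => ¬G.Adj u g ∧ ¬G.Adj v g) ≤ n) :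
    ∃ b ∈ M, (∀ x ∈ b, G.Adj u x) ∨ ∀ x ∈ b, G.Adj v x := by
  by_contra! hno
  set D := H.filter fun g => G.Adj u g ∨ G.Adj v g
  have hD : M.card < D.card := by
    have hsplit : D.card + #(H.filter fun g => ¬G.Adj u g ∧ ¬G.Adj v g) = H.card := by
      simpa only [not_or] using
        card_filter_add_card_filter_not (s := H) fun g => G.Adj u g ∨ G.Adj v g
    omega
  have hDM : D ⊆ M.biUnion (· ∩ D) := by
    intro g hg
    have hgH := (mem_filter.1 hg).1
    obtain ⟨b, hb, hgb⟩ : ∃ b ∈ M, g ∈ b := by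
      by_contra! hg'
      have hgU : g ∈ H \ M.biUnion id := by simpa [hgH] using hg'
      rcases (mem_filter.1 hg).2 with h | h
      · exact hM.not_adj hu hgU h
      · exact hM.not_adj hv hgU h
    exact mem_biUnion.2 ⟨b, hb, mem_inter.2 ⟨hgb, hg⟩⟩
  have hblock : ∀ b ∈ M, (b ∩ D).card ≤ 1 := by
    intro b hb
    refine card_le_one.2 fun x hx y hy => ?_
    by_contra hxy
    simp only [mem_inter, D, mem_filter] at hx hy
    obtain rfl := (hM.1.isNClique b hb).eq_pair hx.1 hy.1 hxy
    have hno' := hno _ hb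
    simp only [mem_insert, mem_singleton, exists_eq_or_imp, exists_eq_left] at hno'
    rcases hx.2.2 with hux | hvx <;> rcases hy.2.2 with huy | hvy
    · exact hno'.1.elim (· hux) (· huy)
    · exact hM.not_adj_and_adj hb (mem_insert_self x _) (mem_insert_of_mem (mem_singleton_self y))
        hxy hu hv huv hux.symm hvy.symm
    · exact hM.not_adj_and_adj hb (mem_insert_of_mem (mem_singleton_self y)) (mem_insert_self x _)
        (Ne.symm hxy) hu hv huv huy.symm hvx.symm
    · exact hno'.2.elim (· hvx) (· hvy)
  have := (card_le_card hDM).trans (card_biUnion_le_card_mul M _ 1 hblock)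
  omega

lemma card_sdiff_biUnion_le (hM : G.IsMaximumMatchingIn H M) {A : Finset V} {n : ℕ}
    (hAH : A ⊆ H) (hMH : n + M.card < H.card)
    (hcommon : ∀ u ∈ A, ∀ v ∈ A, u ≠ v → ¬G.Adj u v →
      #(H.filter fun g => ¬G.Adj u g ∧ ¬G.Adj v g) ≤ n) :
    (A \ M.biUnion id).card ≤ M.card + 1 := by
  set U := A \ M.biUnion id
  have hUH : U ⊆ H \ M.biUnion id := sdiff_subset_sdiff hAH subset_rfl
  have hUA : U ⊆ A := sdiff_subset
  let AdjToAll (u : V) (b : Finset V) : Prop := ∀ x ∈ b, G.Adj u x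
  have hseen : (U.filter fun u => ∃ b ∈ M, AdjToAll u b).card ≤ M.card := by
    refine card_le_card_of_forall_subsingleton AdjToAll (fun u hu => (mem_filter.1 hu).2) ?_
    intro b hb u hu v hv
    by_contra huv
    obtain ⟨x, y, hxy, rfl⟩ := card_eq_two.1 (hM.1.isNClique b hb).card_eq
    simp only [Set.mem_ofPred_eq, mem_filter] at hu hv
    exact hM.not_adj_and_adj hb (mem_insert_self x _) (mem_insert_of_mem (mem_singleton_self y))
      hxy (hUH hu.1.1) (hUH hv.1.1) huv (hu.2 x (mem_insert_self x _)).symm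
      (hv.2 y (mem_insert_of_mem (mem_singleton_self y))).symm
  have hunseen : (U.filter fun u => ¬∃ b ∈ M, AdjToAll u b).card ≤ 1 := by
    refine card_le_one.2 fun u hu v hv => ?_
    by_contra huv
    simp only [mem_filter] at hu hv
    obtain ⟨b, hb, hub | hvb⟩ := hM.exists_block_forall_adj hMH (hUH hu.1) (hUH hv.1) huv
      (hcommon u (hUA hu.1) v (hUA hv.1) huv (hM.not_adj (hUH hu.1) (hUH hv.1)))
    · exact hu.2 ⟨b, hb, hub⟩
    · exact hv.2 ⟨b, hb, hvb⟩
  have := card_filter_add_card_filter_not (s := U) fun u => ∃ b ∈ M, AdjToAll u b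
  omega

end IsMaximumMatchingIn

theorem exists_isMatchingIn_card_ge {A : Finset V} {n : ℕ} (hAH : A ⊆ H)
    (hsize : 4 * H.card ≤ 4 * n + A.card)
    (hcommon : ∀ u ∈ A, ∀ v ∈ A, u ≠ v → ¬G.Adj u v →
      #(H.filter fun g => ¬G.Adj u g ∧ ¬G.Adj v g) ≤ n) :
    ∃ M, G.IsMatchingIn H M ∧ H.card ≤ n + M.card := by
  obtain ⟨M, hM⟩ := exists_isMaximumMatchingIn G H
  refine ⟨M, hM.1, ?_⟩
  by_contra! hMH
  have hU := hM.card_sdiff_biUnion_le hAH hMH hcommon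
  have hA : A.card ≤ (A \ M.biUnion id).card + 2 * M.card :=
    hM.1.card_biUnion ▸ card_le_card_sdiff_add_card
  omega

lemma exists_colouring_of_cover {m : ℕ} (P : Finset (Finset V))
    (hcover : ∀ v ∈ H, ∃ b ∈ P, v ∈ b) (hclique : ∀ b ∈ P, G.IsClique (b : Set V))
    (hcard : ∀ b ∈ P, b.card ≤ m) :
    ∃ φ : V → ℕ, (∀ v ∈ H, φ v < P.card) ∧
      (∀ u ∈ H, ∀ v ∈ H, u ≠ v → φ u = φ v → G.Adj u v) ∧
      ∀ c, #(H.filter fun v => φ v = c) ≤ m := by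
  set L := P.toList
  let φ (v : V) : ℕ := L.findIdx (v ∈ ·)
  have hlt : ∀ v ∈ H, φ v < L.length := fun v hv => by
    obtain ⟨b, hb, hvb⟩ := hcover v hv
    exact List.findIdx_lt_length_of_exists ⟨b, mem_toList.2 hb, by simpa using hvb⟩
  have hmem : ∀ v (hv : v ∈ H), v ∈ L[φ v]'(hlt v hv) := fun v hv => by
    simpa using List.findIdx_getElem (w := hlt v hv)
  have hblock : ∀ i (hi : i < L.length), L[i] ∈ P :=
    fun i hi => mem_toList.1 (List.getElem_mem hi)
  refine ⟨φ, fun v hv => length_toList P ▸ hlt v hv, fun u hu v hv huv hφ => ?_,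
    fun c => ?_⟩
  · have hv' := hmem v hv
    simp only [← hφ] at hv'
    exact hclique _ (hblock _ (hlt u hu)) (hmem u hu) hv' huv
  · by_cases hc : c < L.length
    · refine (card_le_card fun v hv => ?_).trans (hcard _ (hblock c hc))
      obtain ⟨hvH, rfl⟩ := mem_filter.1 hv
      exact hmem v hvH
    · rw [card_eq_zero.2 (filter_eq_empty_iff.2
        fun v hv (hvc : φ v = c) => hc (hvc ▸ hlt v hv))]
      exact Nat.zero_le m

lemma IsMatchingIn.exists_colouring (hM : G.IsMatchingIn H M) :
    ∃ φ : V → ℕ, (∀ v ∈ H, φ v + M.card < H.card) ∧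
      (∀ u ∈ H, ∀ v ∈ H, u ≠ v → φ u = φ v → G.Adj u v) ∧
      ∀ c, #(H.filter fun v => φ v = c) ≤ 2 := by
  set P := M ∪ (H \ M.biUnion id).image ({·} : V → Finset V)
  have hcover : ∀ v ∈ H, ∃ b ∈ P, v ∈ b := by
    intro v hv
    by_cases hvM : v ∈ M.biUnion id
    · obtain ⟨b, hb, hvb⟩ := mem_biUnion.1 hvM
      exact ⟨b, mem_union_left _ hb, hvb⟩
    · exact ⟨{v}, mem_union_right _ (mem_image_of_mem _ (mem_sdiff.2 ⟨hv, hvM⟩)),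
        mem_singleton_self v⟩
  have hblocks : ∀ b ∈ P, G.IsClique (b : Set V) ∧ b.card ≤ 2 := by
    intro b hb
    rcases mem_union.1 hb with hb | hb
    · exact ⟨(hM.isNClique b hb).isClique, (hM.isNClique b hb).card_eq.le⟩
    · obtain ⟨v, -, rfl⟩ := mem_image.1 hb
      simp
  have hP : P.card + M.card ≤ H.card := by
    have hunion : P.card ≤ M.card + (H \ M.biUnion id).card :=
      (card_union_le _ _).trans (Nat.add_le_add_left card_image_le _)
    have hsdiff := card_sdiff_of_subset hM.biUnion_subset
    have hle := card_le_card hM.biUnion_subset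
    rw [hM.card_biUnion] at hsdiff hle
    omega
  obtain ⟨φ, hlt, hadj, htwice⟩ := exists_colouring_of_cover P hcover
    (fun b hb => (hblocks b hb).1) (fun b hb => (hblocks b hb).2)
  exact ⟨φ, fun v hv => by have := hlt v hv; omega, hadj, htwice⟩

end SimpleGraph

def Finset.disjointGraph (α : Type*) : SimpleGraph (Finset α) where
  Adj e f := e ≠ f ∧ Disjoint e f
  symm := ⟨fun _ _ h => ⟨h.1.symm, h.2.symm⟩⟩
  loopless := ⟨fun _ h => h.1 rfl⟩

lemma Useful.card_filter_not_adj_le {n : ℕ} {H : Finset (Finset (Fin n))}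
    {e f : Finset (Fin n)} (h : Useful H e f) :
    #(H.filter fun g => ¬(disjointGraph (Fin n)).Adj e g ∧ ¬(disjointGraph (Fin n)).Adj f g)
      ≤ n := by
  have hsub : H.filter (fun g => ¬(disjointGraph (Fin n)).Adj e g ∧
      ¬(disjointGraph (Fin n)).Adj f g) ⊆ insert e (insert f (CommonNbrs H e f)) := by
    intro g hg
    simp only [disjointGraph, mem_filter, not_and, not_disjoint_iff_nonempty_inter] at hg
    by_cases hge : g = e
    · exact hge ▸ mem_insert_self g _
    by_cases hgf : g = f
    · exact hgf ▸ mem_insert_of_mem (mem_insert_self g _)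
    refine mem_insert_of_mem (mem_insert_of_mem (mem_filter.2 ⟨hg.1, hge, ?_, hgf, ?_⟩))
    · rw [inter_comm]; exact hg.2.1 (Ne.symm hge)
    · rw [inter_comm]; exact hg.2.2 (Ne.symm hgf)
  have hcommon := h.2.2
  have := card_le_card hsub
  have := card_insert_le e (insert f (CommonNbrs H e f))
  have := card_insert_le f (CommonNbrs H e f)
  omega

theorem colouring_from_useful_part_general
    (n : ℕ) (H A B : Finset (Finset (Fin n)))
    (hunion : A ∪ B = H)
    (hsize : (A.card : ℝ) + (B.card : ℝ) - (n : ℝ) ≤ (A.card : ℝ) / 4)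
    (huse : ∀ e ∈ A, ∀ f ∈ A, e ≠ f → (e ∩ f).Nonempty → Useful H e f) :
    ∃ φ : Finset (Fin n) → ℕ,
      (∀ e ∈ H, φ e < n) ∧ IsProperEC H φ ∧ ColoursUsedAtMostTwice H φ := by
  have hAH : A ⊆ H := hunion ▸ subset_union_left
  have hsize' : 4 * H.card ≤ 4 * n + A.card := by
    have hAB : (H.card : ℝ) ≤ A.card + B.card := by exact_mod_cast hunion ▸ card_union_le A B
    exact_mod_cast (by linarith : (4 * H.card : ℝ) ≤ 4 * n + A.card)
  obtain ⟨M, hM, hMH⟩ :=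
    SimpleGraph.exists_isMatchingIn_card_ge (G := disjointGraph (Fin n)) hAH hsize'
    fun e he f hf hef hadj => Useful.card_filter_not_adj_le <|
      huse e he f hf hef (not_disjoint_iff_nonempty_inter.1 fun h => hadj ⟨hef, h⟩)
  obtain ⟨φ, hlt, hadj, htwice⟩ := hM.exists_colouring
  refine ⟨φ, fun e he => by have := hlt e he; omega, fun e he f hf hef hef' hφ => ?_, htwice⟩
  exact not_disjoint_iff_nonempty_inter.2 hef' (hadj e he f hf hef hφ).2

/-- If `{A, B}` is a partition of the edge set of an `n`-vertex linear hypergraph `H` with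
`|A| + |B| - n ≤ |A|/4`, and every pair of distinct intersecting edges of `A` is useful, then
`H` has a proper edge-colouring with `n` colours in which each colour is used at most twice. -/
theorem colouring_from_useful_part
    (n : ℕ) (H A B : Finset (Finset (Fin n)))
    (hne : ∀ e ∈ H, e.Nonempty) (hlin : LinearHG H)
    (hunion : A ∪ B = H) (hdisj : Disjoint A B)
    (hsize : (A.card : ℝ) + (B.card : ℝ) - (n : ℝ) ≤ (A.card : ℝ) / 4)
    (huse : ∀ e ∈ A, ∀ f ∈ A, e ≠ f → (e ∩ f).Nonempty → Useful H e f) :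
    ∃ φ : Finset (Fin n) → ℕ,
      (∀ e ∈ H, φ e < n) ∧ IsProperEC H φ ∧ ColoursUsedAtMostTwice H φ :=
  colouring_from_useful_part_general n H A B hunion hsize huse
end

section
/- There exists δ0 ∈ (0,1) such that for every δ ∈ (0, δ0] there exists n0 ∈ ℕ with the following property. Let n ≥ n0 and let k be a positive integer with (k−1)² + k + 1 ≤ n ≤ k² + k + 1. Let H be an n-vertex linear hypergraph in which every edge e satisfies |e| ≥ (1−δ)√n, let e, f ∈ E(H) be distinct intersecting edges of size at most k, let w ∈ e ∩ f, and let m be the number of edges of H of size at most k−1 containing w. If at least one of e or f has size at most k−1, or if m ≤ 1/(3δ), then {e, f} is a useful pair. -/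
open Finset
open scoped Classical

/-!
Split the common neighbours of `e` and `f` into those through `w` and those avoiding `w`.
By linearity an edge avoiding `w` is determined by the points in which it meets `e \ {w}` and
`f \ {w}`, so there are at most `(|e| - 1)(|f| - 1)` of them, while at most `d(w) - 2` pass
through `w`, where `d(w)` is the number of edges containing `w`. Hence `{e, f}` is useful as soon as `(|e| - 1)(|f| - 1) + d(w) ≤ n`.

Since `k - 1/2 ≤ √n ≤ k + 1`, taking `n ≥ (2/δ)²` forces `δk ≥ 1`, and then every edge has size
at least `k - 2δk`. The edges through `w` are disjoint away from `w`, so `∑ (|g| - 1) ≤ n - 1`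
over them, which becomes `d(w) (k - 1) ≤ n - 1 + 2δk m`. If `e` or `f` has size at most `k - 1`,
this gives `d(w) ≤ 2k` and `(|e| - 1)(|f| - 1) ≤ (k - 2)(k - 1)`; otherwise `m ≤ 1/(3δ)` gives
`d(w) ≤ n - (k - 1)²`.
-/

theorem card_commonNbrs_filter_mem_add_two_le {n : ℕ} {H : Finset (Finset (Fin n))}
    {e f : Finset (Fin n)} (he : e ∈ H) (hf : f ∈ H) (hef : e ≠ f) {w : Fin n}
    (hw : w ∈ e ∩ f) :
    ((CommonNbrs H e f).filter (w ∈ ·)).card + 2 ≤ (H.filter (w ∈ ·)).card := by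
  obtain ⟨hwe, hwf⟩ := mem_inter.1 hw
  have hef_sub : ({e, f} : Finset _) ⊆ H.filter (w ∈ ·) := by
    simp [insert_subset_iff, he, hf, hwe, hwf]
  have hsub : (CommonNbrs H e f).filter (w ∈ ·) ⊆ H.filter (w ∈ ·) \ {e, f} := by
    intro g hg
    simp only [CommonNbrs, mem_filter] at hg
    simp [hg.1.1, hg.2, hg.1.2.1, hg.1.2.2.2.1]
  have hsplit := card_sdiff_add_card_eq_card hef_sub
  rw [card_pair hef] at hsplit
  have hle := card_le_card hsub
  omega

namespace LinearHG

variable {n : ℕ} {H : Finset (Finset (Fin n))}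

theorem eq_of_mem_inter (hlin : LinearHG H) {e f : Finset (Fin n)} (he : e ∈ H) (hf : f ∈ H)
    (hef : e ≠ f) {x y : Fin n} (hx : x ∈ e ∩ f) (hy : y ∈ e ∩ f) : x = y :=
  Finset.card_le_one.mp (hlin e he f hf hef) x hx y hy

theorem inter_eq_singleton (hlin : LinearHG H) {e f : Finset (Fin n)} (he : e ∈ H) (hf : f ∈ H)
    (hef : e ≠ f) {w : Fin n} (hw : w ∈ e ∩ f) : e ∩ f = {w} :=
  eq_singleton_iff_unique_mem.mpr ⟨hw, fun _ hx => hlin.eq_of_mem_inter he hf hef hx hw⟩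

theorem card_filter_mem_mem_le_one (hlin : LinearHG H) {x y : Fin n} (hxy : x ≠ y) :
    (H.filter fun g => x ∈ g ∧ y ∈ g).card ≤ 1 := by
  refine Finset.card_le_one.mpr fun a ha b hb => ?_
  by_contra hab
  simp only [mem_filter] at ha hb
  exact hxy (hlin.eq_of_mem_inter ha.1 hb.1 hab (mem_inter.2 ⟨ha.2.1, hb.2.1⟩)
    (mem_inter.2 ⟨ha.2.2, hb.2.2⟩))

theorem sum_card_sub_one_le (hlin : LinearHG H) (w : Fin n) :
    ∑ g ∈ H.filter (w ∈ ·), (g.card - 1) ≤ n - 1 := by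
  have hdisj : ((H.filter (w ∈ ·) : Finset _) : Set (Finset (Fin n))).PairwiseDisjoint
      (·.erase w) := by
    intro g hg g' hg' hne
    simp only [coe_filter, Set.mem_ofPred_eq] at hg hg'
    refine Finset.disjoint_left.mpr fun x hx hx' => ne_of_mem_erase hx ?_
    exact hlin.eq_of_mem_inter hg.1 hg'.1 hne
      (mem_inter.2 ⟨mem_of_mem_erase hx, mem_of_mem_erase hx'⟩) (mem_inter.2 ⟨hg.2, hg'.2⟩)
  calc ∑ g ∈ H.filter (w ∈ ·), (g.card - 1)
      = ∑ g ∈ H.filter (w ∈ ·), (g.erase w).card :=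
        sum_congr rfl fun g hg => (card_erase_of_mem (mem_filter.1 hg).2).symm
    _ = ((H.filter (w ∈ ·)).biUnion (·.erase w)).card := (card_biUnion hdisj).symm
    _ ≤ (univ.erase w).card :=
        card_le_card fun x hx => by
          obtain ⟨g, -, hxg⟩ := mem_biUnion.mp hx
          exact mem_erase.mpr ⟨ne_of_mem_erase hxg, mem_univ x⟩
    _ = n - 1 := by simp

theorem card_filter_mem_mul_sub_one_le (hlin : LinearHG H) (w : Fin n) {k : ℕ} {c : ℝ}
    (hsize : ∀ g ∈ H, (k : ℝ) - c ≤ g.card) :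
    ((H.filter (w ∈ ·)).card : ℝ) * (k - 1) ≤
      n - 1 + (H.filter fun g => w ∈ g ∧ g.card ≤ k - 1).card * c := by
  set D := H.filter (w ∈ ·)
  have hsum : ∑ g ∈ D, ((g.card : ℝ) - 1) ≤ n - 1 := by
    have hcast : ((∑ g ∈ D, (g.card - 1) : ℕ) : ℝ) ≤ ((n - 1 : ℕ) : ℝ) := by
      exact_mod_cast hlin.sum_card_sub_one_le w
    rw [Nat.cast_sum, Nat.cast_sub (Fin.pos w), Nat.cast_one] at hcast
    convert hcast using 2 with g hg
    rw [Nat.cast_sub (card_pos.2 ⟨w, (mem_filter.1 hg).2⟩), Nat.cast_one]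
  have hpoint :
      ∀ g ∈ D, (k : ℝ) - 1 ≤ ((g.card : ℝ) - 1) + if g.card ≤ k - 1 then c else 0 := by
    intro g hg
    split_ifs with hsmall
    · linarith [hsize g (mem_filter.1 hg).1]
    · have : k ≤ g.card := by omega
      have : (k : ℝ) ≤ g.card := by exact_mod_cast this
      linarith
  calc (D.card : ℝ) * (k - 1) = ∑ g ∈ D, ((k : ℝ) - 1) := by rw [sum_const, nsmul_eq_mul]
    _ ≤ ∑ g ∈ D, (((g.card : ℝ) - 1) + if g.card ≤ k - 1 then c else 0) := sum_le_sum hpoint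
    _ = ∑ g ∈ D, ((g.card : ℝ) - 1) + (D.filter fun g => g.card ≤ k - 1).card * c := by
      rw [sum_add_distrib, sum_ite, sum_const_zero, add_zero, sum_const, nsmul_eq_mul]
    _ ≤ _ := by rw [filter_filter]; linarith

theorem card_commonNbrs_filter_not_mem_le (hlin : LinearHG H) {e f : Finset (Fin n)} {w : Fin n}
    (hwef : e ∩ f = {w}) :
    ((CommonNbrs H e f).filter (w ∉ ·)).card ≤ (e.card - 1) * (f.card - 1) := by
  have hw : w ∈ e ∩ f := hwef ▸ mem_singleton_self w
  have hsub : (CommonNbrs H e f).filter (w ∉ ·) ⊆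
      ((e.erase w) ×ˢ (f.erase w)).biUnion fun p => H.filter fun g => p.1 ∈ g ∧ p.2 ∈ g := by
    intro g hg
    simp only [CommonNbrs, mem_filter] at hg
    obtain ⟨⟨hgH, -, ⟨x, hx⟩, -, ⟨y, hy⟩⟩, hwg⟩ := hg
    rw [mem_inter] at hx hy
    refine mem_biUnion.mpr ⟨(x, y), mem_product.mpr ⟨?_, ?_⟩, mem_filter.mpr ⟨hgH, hx.1, hy.1⟩⟩
    · exact mem_erase.mpr ⟨fun h => hwg (h ▸ hx.1), hx.2⟩
    · exact mem_erase.mpr ⟨fun h => hwg (h ▸ hy.1), hy.2⟩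
  have hpairs : ∀ p ∈ (e.erase w) ×ˢ (f.erase w),
      (H.filter fun g => p.1 ∈ g ∧ p.2 ∈ g).card ≤ 1 := by
    rintro ⟨x, y⟩ hp
    obtain ⟨hx, hy⟩ := mem_product.mp hp
    refine hlin.card_filter_mem_mem_le_one fun (hxy : x = y) => ne_of_mem_erase hx ?_
    have : x ∈ e ∩ f := mem_inter.2 ⟨mem_of_mem_erase hx, hxy ▸ mem_of_mem_erase hy⟩
    rwa [hwef, mem_singleton] at this
  calc _ ≤ _ := card_le_card hsub
    _ ≤ ((e.erase w) ×ˢ (f.erase w)).card * 1 := card_biUnion_le_card_mul _ _ _ hpairs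
    _ = (e.card - 1) * (f.card - 1) := by
      rw [mul_one, card_product, card_erase_of_mem (mem_inter.1 hw).1,
        card_erase_of_mem (mem_inter.1 hw).2]

theorem card_commonNbrs_add_two_le (hlin : LinearHG H) {e f : Finset (Fin n)} (he : e ∈ H)
    (hf : f ∈ H) (hef : e ≠ f) {w : Fin n} (hw : w ∈ e ∩ f) :
    (CommonNbrs H e f).card + 2 ≤ (e.card - 1) * (f.card - 1) + (H.filter (w ∈ ·)).card := by
  rw [← card_filter_add_card_filter_not (s := CommonNbrs H e f) (w ∈ ·)]
  have havoid := hlin.card_commonNbrs_filter_not_mem_le (hlin.inter_eq_singleton he hf hef hw)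
  have hthrough := card_commonNbrs_filter_mem_add_two_le he hf hef hw
  omega

theorem useful_of_le (hlin : LinearHG H) {e f : Finset (Fin n)} (he : e ∈ H) (hf : f ∈ H)
    (hef : e ≠ f) {w : Fin n} (hw : w ∈ e ∩ f)
    (hle : ((e.card : ℝ) - 1) * ((f.card : ℝ) - 1) + (H.filter (w ∈ ·)).card ≤ n) :
    Useful H e f := by
  refine ⟨hef, ⟨w, hw⟩, ?_⟩
  have he1 : 1 ≤ e.card := card_pos.2 ⟨w, (mem_inter.1 hw).1⟩
  have hf1 : 1 ≤ f.card := card_pos.2 ⟨w, (mem_inter.1 hw).2⟩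
  have key : (((CommonNbrs H e f).card + 2 : ℕ) : ℝ) ≤
      (((e.card - 1) * (f.card - 1) + (H.filter (w ∈ ·)).card : ℕ) : ℝ) := by
    exact_mod_cast hlin.card_commonNbrs_add_two_le he hf hef hw
  push_cast [Nat.cast_sub he1, Nat.cast_sub hf1] at key
  have : ((CommonNbrs H e f).card : ℝ) ≤ n - 2 := by linarith
  exact_mod_cast this

end LinearHG

theorem one_le_mul_of_two_div_sq_le {δ k x : ℝ} (hδ : 0 < δ) (hδ0 : δ ≤ 1 / 100)
    (hx : (2 / δ) ^ 2 ≤ x) (hxk : x ≤ k ^ 2 + k + 1) (hk : 0 ≤ k) : 1 ≤ δ * k := by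
  have hlow : 2 / δ ≤ √x := (Real.le_sqrt (by positivity) (le_trans (by positivity) hx)).2 hx
  have hhigh : √x ≤ k + 1 := Real.sqrt_le_iff.2 ⟨by linarith, by nlinarith⟩
  have : 2 ≤ (k + 1) * δ := (div_le_iff₀ hδ).1 (hlow.trans hhigh)
  nlinarith

theorem sub_two_mul_mul_le_of_one_sub_mul_sqrt_le {δ k x s : ℝ} (hδ : 0 ≤ δ) (hδ1 : δ ≤ 1)
    (hδk : 1 ≤ δ * k) (hx : (k - 1) ^ 2 + k + 1 ≤ x) (hs : (1 - δ) * √x ≤ s) :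
    k - 2 * δ * k ≤ s := by
  have hsqrt : k - 1 / 2 ≤ √x := (le_abs_self _).trans (Real.abs_le_sqrt (by nlinarith))
  nlinarith [mul_le_mul_of_nonneg_left hsqrt (sub_nonneg.2 hδ1)]

theorem le_two_mul_of_mul_sub_one_le {δ k n D m : ℝ} (hδ : 0 < δ) (hδ0 : δ ≤ 1 / 100)
    (hδk : 1 ≤ δ * k) (hmD : m ≤ D) (hn : n ≤ k ^ 2 + k + 1)
    (hD : D * (k - 1) ≤ n - 1 + m * (2 * δ * k)) : D ≤ 2 * k := by
  have hk : 100 ≤ k := by nlinarith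
  have hDk : D * (k - 1 - 2 * δ * k) ≤ k ^ 2 + k := by
    nlinarith [mul_le_mul_of_nonneg_right hmD (by positivity : 0 ≤ 2 * δ * k)]
  by_contra! h
  nlinarith [mul_lt_mul_of_pos_right h (by nlinarith : 0 < k - 1 - 2 * δ * k)]

theorem add_sub_one_sq_le_of_mul_sub_one_le {δ k n D m : ℝ} (hδ : 0 < δ) (hk : 6 ≤ k)
    (hm : m ≤ 1 / (3 * δ)) (hn : (k - 1) ^ 2 + k + 1 ≤ n)
    (hD : D * (k - 1) ≤ n - 1 + m * (2 * δ * k)) : D + (k - 1) ^ 2 ≤ n := by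
  have hmk : m * (2 * δ * k) ≤ 2 * k / 3 :=
    calc m * (2 * δ * k) ≤ 1 / (3 * δ) * (2 * δ * k) :=
          mul_le_mul_of_nonneg_right hm (by positivity)
      _ = 2 * k / 3 := by field_simp
  have : D * (k - 1) ≤ (n - (k - 1) ^ 2) * (k - 1) := by
    nlinarith [mul_nonneg (sub_nonneg.2 hn) (by linarith : (0 : ℝ) ≤ k - 2)]
  linarith [le_of_mul_le_mul_right this (by linarith)]

theorem sub_one_mul_sub_one_le {a b k : ℝ} (ha : 1 ≤ a) (hb : 1 ≤ b) (hak : a ≤ k) (hbk : b ≤ k)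
    (hsmall : a + 1 ≤ k ∨ b + 1 ≤ k) : (a - 1) * (b - 1) ≤ (k - 2) * (k - 1) := by
  rcases hsmall with h | h
  · exact mul_le_mul (by linarith) (by linarith) (by linarith) (by linarith)
  · nlinarith [mul_le_mul (sub_le_sub_right hak 1) (by linarith : b - 1 ≤ k - 2)
      (by linarith) (by linarith : (0 : ℝ) ≤ k - 1)]

/-- For sufficiently small `δ` and large `n` with `(k-1)² + k + 1 ≤ n ≤ k² + k + 1`: in an
`n`-vertex linear hypergraph all of whose edges have size at least `(1-δ)√n`, for distinct
intersecting edges `e, f` of size at most `k` meeting in a vertex `w`, if `m` is the number of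
edges of size at most `k-1` containing `w`, and either one of `e`, `f` has size at most `k-1`
or `m ≤ 1/(3δ)`, then `{e, f}` is a useful pair. -/
theorem useful_pair_criterion :
    ∃ δ0 : ℝ, 0 < δ0 ∧ δ0 < 1 ∧
      ∀ δ : ℝ, 0 < δ → δ ≤ δ0 →
        ∃ n0 : ℕ, ∀ n : ℕ, n0 ≤ n →
          ∀ k : ℕ, 0 < k → (k - 1) ^ 2 + k + 1 ≤ n → n ≤ k ^ 2 + k + 1 →
            ∀ H : Finset (Finset (Fin n)), LinearHG H →
              (∀ e ∈ H, (1 - δ) * Real.sqrt n ≤ (e.card : ℝ)) →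
              ∀ e ∈ H, ∀ f ∈ H, e ≠ f → (e ∩ f).Nonempty →
                e.card ≤ k → f.card ≤ k →
                ∀ w : Fin n, w ∈ e ∩ f →
                  ∀ m : ℕ, m = (H.filter fun g => w ∈ g ∧ g.card ≤ k - 1).card →
                    (e.card ≤ k - 1 ∨ f.card ≤ k - 1 ∨ (m : ℝ) ≤ 1 / (3 * δ)) →
                    Useful H e f := by
  refine ⟨1 / 100, by norm_num, by norm_num, fun δ hδ hδ0 => ⟨⌈(2 / δ) ^ 2⌉₊, ?_⟩⟩
  intro n hn k hk hlow hhigh H hlin hsize e he f hf hef _ hek hfk w hw m hm hcase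
  have hlowR : ((k : ℝ) - 1) ^ 2 + k + 1 ≤ n := by
    have : (((k - 1) ^ 2 + k + 1 : ℕ) : ℝ) ≤ n := by exact_mod_cast hlow
    push_cast [Nat.cast_sub hk] at this
    exact this
  have hhighR : (n : ℝ) ≤ k ^ 2 + k + 1 := by exact_mod_cast hhigh
  have hδk : 1 ≤ δ * k :=
    one_le_mul_of_two_div_sq_le hδ hδ0 (Nat.ceil_le.1 hn) hhighR k.cast_nonneg
  have hdeg := hlin.card_filter_mem_mul_sub_one_le w fun g hg =>
    sub_two_mul_mul_le_of_one_sub_mul_sqrt_le hδ.le (by linarith) hδk hlowR (hsize g hg)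
  rw [← hm] at hdeg
  have hmD : m ≤ (H.filter (w ∈ ·)).card :=
    hm ▸ card_le_card (monotone_filter_right H fun _ _ h => h.1)
  have he1 : (1 : ℝ) ≤ e.card := by exact_mod_cast card_pos.2 ⟨w, (mem_inter.1 hw).1⟩
  have hf1 : (1 : ℝ) ≤ f.card := by exact_mod_cast card_pos.2 ⟨w, (mem_inter.1 hw).2⟩
  have hekR : (e.card : ℝ) ≤ k := by exact_mod_cast hek
  have hfkR : (f.card : ℝ) ≤ k := by exact_mod_cast hfk
  refine hlin.useful_of_le he hf hef hw ?_
  by_cases hfew : (m : ℝ) ≤ 1 / (3 * δ)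
  · have hD := add_sub_one_sq_le_of_mul_sub_one_le hδ (by nlinarith) hfew hlowR hdeg
    nlinarith [mul_le_mul (sub_le_sub_right hekR 1) (sub_le_sub_right hfkR 1)
      (sub_nonneg.2 hf1) (by linarith : (0 : ℝ) ≤ k - 1)]
  · have hsmall : (e.card : ℝ) + 1 ≤ k ∨ (f.card : ℝ) + 1 ≤ k := by
      rcases hcase with h | h | h
      · exact .inl (by exact_mod_cast (by omega : e.card + 1 ≤ k))
      · exact .inr (by exact_mod_cast (by omega : f.card + 1 ≤ k))
      · exact absurd h hfew
    have hD := le_two_mul_of_mul_sub_one_le hδ hδ0 hδk (by exact_mod_cast hmD) hhighR hdeg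
    nlinarith [sub_one_mul_sub_one_le he1 hf1 hekR hfkR hsmall]
end

section
/- For all τ ∈ (0,1) and K ≥ 1 with 1 − τ − 7τ^{1/4}/K > 0, there exists r1 ∈ ℕ such that the following holds. If H is an n-vertex linear hypergraph in which every edge e satisfies |e| ≥ r1, then there exists a linear ordering ≺ of the edges of H such that at least one of the following holds: (a) every e ∈ E(H) satisfies fwddeg(e) ≤ (1−τ)n; or (b) there is a set W ⊆ E(H) such that (W1) max_{e∈W}|e| ≤ (1 + 3τ^{1/4}K^4)·min_{e∈W}|e| and (W2) vol_H(W) ≥ (1 − τ − 7τ^{1/4}/K)² / (1 + 3τ^{1/4}K^4); moreover, if e* is the last edge of W in the ordering, then (O1) every f ∈ E(H) with e* ≺ f and f ≠ e* satisfies fwddeg(f) ≤ (1−τ)n, and (O2) for all edges e, f with f ⪯ e ⪯ e* one has |f| ≥ |e|. -/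
open Finset
open scoped Classical
set_option maxHeartbeats 1000000

/-- `pos` encodes a linear ordering of the edges of `H`: edge `f` precedes edge `e` iff
`pos f < pos e`.  Being injective on `H`, it is a linear order on the edges. -/
def OrderOn {n : ℕ} (H : Finset (Finset (Fin n))) (pos : Finset (Fin n) → ℕ) : Prop :=
  ∀ e ∈ H, ∀ f ∈ H, pos e = pos f → e = f

/-- The forward degree of an edge `e` with respect to the ordering given by `pos`: the number
of edges of `H` which precede `e` and intersect `e`. -/
def fwdDeg {n : ℕ} (H : Finset (Finset (Fin n))) (pos : Finset (Fin n) → ℕ)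
    (e : Finset (Fin n)) : ℕ :=
  (H.filter fun f => pos f < pos e ∧ (f ∩ e).Nonempty).card

/-- The normalised volume of a set `W` of edges of an `n`-vertex linear hypergraph:
`∑_{e ∈ W} C(|e|,2) / C(n,2)`. -/
noncomputable def volHG {n : ℕ} (W : Finset (Finset (Fin n))) : ℝ :=
  (∑ e ∈ W, (e.card.choose 2 : ℝ)) / (n.choose 2 : ℝ)

namespace Reorder

variable {n : ℕ}

/-- degree of an edge within a family -/
noncomputable def degH (F : Finset (Finset (Fin n))) (e : Finset (Fin n)) : ℕ :=
  (F.filter fun g => g ≠ e ∧ (g ∩ e).Nonempty).card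

lemma erase_disjoint {F : Finset (Finset (Fin n))} (hlin : LinearHG F) {v : Fin n}
    {f g : Finset (Fin n)} (hf : f ∈ F) (hg : g ∈ F) (hvf : v ∈ f) (hvg : v ∈ g)
    (hne : f ≠ g) : Disjoint (f.erase v) (g.erase v) := by
  rw [Finset.disjoint_left]
  intro x hxf hxg
  rcases Finset.mem_erase.mp hxf with ⟨hxv, hxf'⟩
  rcases Finset.mem_erase.mp hxg with ⟨_, hxg'⟩
  have h1 : (f ∩ g).card ≤ 1 := hlin f hf g hg hne
  have hx : x ∈ f ∩ g := Finset.mem_inter.mpr ⟨hxf', hxg'⟩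
  have hv : v ∈ f ∩ g := Finset.mem_inter.mpr ⟨hvf, hvg⟩
  exact hxv (Finset.card_le_one.mp h1 x hx v hv)

/-- capacity at a vertex: the masses of the edges through `v` sum to at most `n-1`. -/
lemma mass_le (F : Finset (Finset (Fin n))) (hlin : LinearHG F) (hn : 1 ≤ n) (v : Fin n) :
    ∑ f ∈ F.filter (fun f => v ∈ f), ((f.card : ℝ) - 1) ≤ (n : ℝ) - 1 := by
  classical
  set P := F.filter (fun f => v ∈ f) with hP
  have hmem : ∀ f ∈ P, v ∈ f := fun f hf => (Finset.mem_filter.mp hf).2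
  have h1 : ∑ f ∈ P, ((f.card : ℝ) - 1) = ((∑ f ∈ P, (f.erase v).card : ℕ) : ℝ) := by
    push_cast
    apply Finset.sum_congr rfl
    intro f hf
    have h2 : (f.erase v).card = f.card - 1 := Finset.card_erase_of_mem (hmem f hf)
    have h3 : 1 ≤ f.card := Finset.card_pos.mpr ⟨v, hmem f hf⟩
    rw [h2]
    push_cast [Nat.cast_sub h3]
    ring
  rw [h1]
  have h4 : ∑ f ∈ P, (f.erase v).card = (P.biUnion (fun f => f.erase v)).card := by
    rw [Finset.card_biUnion]
    intro f hf g hg hfg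
    exact erase_disjoint hlin (Finset.mem_filter.mp hf).1 (Finset.mem_filter.mp hg).1
      (hmem f hf) (hmem g hg) hfg
  have h5 : (P.biUnion (fun f => f.erase v)).card ≤ (Finset.univ.erase v).card := by
    apply Finset.card_le_card
    intro x hx
    rcases Finset.mem_biUnion.mp hx with ⟨f, _, hxf⟩
    exact Finset.mem_erase.mpr ⟨(Finset.mem_erase.mp hxf).1, Finset.mem_univ x⟩
  have h6 : (Finset.univ.erase v).card = n - 1 := by
    rw [Finset.card_erase_of_mem (Finset.mem_univ v)]
    simp
  rw [h4]
  calc ((P.biUnion (fun f => f.erase v)).card : ℝ) ≤ ((n - 1 : ℕ) : ℝ) := by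
        exact_mod_cast h6 ▸ Nat.cast_le.mpr h5
    _ = (n : ℝ) - 1 := by push_cast [Nat.cast_sub hn]; ring

lemma deg_le_sum (F : Finset (Finset (Fin n))) (e : Finset (Fin n)) :
    degH F e ≤ ∑ v ∈ e, (F.filter (fun g => v ∈ g)).card := by
  classical
  have hsub : (F.filter fun g => g ≠ e ∧ (g ∩ e).Nonempty) ⊆
      e.biUnion (fun v => F.filter (fun g => v ∈ g)) := by
    intro g hg
    rcases Finset.mem_filter.mp hg with ⟨hgF, _, ⟨x, hx⟩⟩
    rcases Finset.mem_inter.mp hx with ⟨hxg, hxe⟩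
    exact Finset.mem_biUnion.mpr ⟨x, hxe, Finset.mem_filter.mpr ⟨hgF, hxg⟩⟩
  exact le_trans (Finset.card_le_card hsub) Finset.card_biUnion_le


lemma card_le_n (f : Finset (Fin n)) : f.card ≤ n := by
  simpa using Finset.card_le_univ f

lemma step_ineq (τ : ℝ) (hτ1 : τ < 1) (F : Finset (Finset (Fin n))) (hlin : LinearHG F)
    (hn : 1 ≤ n) (R : ℝ) (hR : 2 ≤ R)
    (hminsize : ∀ f ∈ F, R ≤ (f.card : ℝ))
    (e : Finset (Fin n)) (he : e ∈ F)
    (hdeg : (1 - τ) * n < (degH F e : ℝ))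
    (s : ℝ) (hs : R ≤ s) :
    (1 - τ) * n * (R - 1) * (s - 1) ≤
      (∑ v ∈ e, ∑ f ∈ F.filter (fun f => v ∈ f ∧ (f.card : ℝ) ≤ s), ((f.card : ℝ) - 1)) * (s - R)
        + (e.card : ℝ) * ((n : ℝ) - 1) * (R - 1) := by
  classical
  have hR1 : (0:ℝ) < R - 1 := by linarith
  have hs1 : (0:ℝ) < s - 1 := by linarith
  -- per-vertex inequality
  have key : ∀ v ∈ e, (R - 1) * (s - 1) * (((F.filter (fun g => v ∈ g)).card : ℝ)) ≤
      (∑ f ∈ F.filter (fun f => v ∈ f ∧ (f.card : ℝ) ≤ s), ((f.card : ℝ) - 1)) * (s - R)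
        + ((n : ℝ) - 1) * (R - 1) := by
    intro v _
    set aX := ∑ f ∈ F.filter (fun f => v ∈ f ∧ (f.card : ℝ) ≤ s), ((f.card : ℝ) - 1) with haX
    have hXv : F.filter (fun f => v ∈ f ∧ (f.card : ℝ) ≤ s)
        = (F.filter (fun f => v ∈ f)).filter (fun f => (f.card : ℝ) ≤ s) := by
      rw [Finset.filter_filter]
    have hYv : F.filter (fun f => v ∈ f ∧ ¬((f.card : ℝ) ≤ s))
        = (F.filter (fun f => v ∈ f)).filter (fun f => ¬((f.card : ℝ) ≤ s)) := by
      rw [Finset.filter_filter]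
    have hsplit : (F.filter (fun f => v ∈ f)).card
        = (F.filter (fun f => v ∈ f ∧ (f.card : ℝ) ≤ s)).card
          + (F.filter (fun f => v ∈ f ∧ ¬((f.card : ℝ) ≤ s))).card := by
      rw [hXv, hYv, Finset.card_filter_add_card_filter_not]
    have h1 : ((F.filter (fun f => v ∈ f ∧ (f.card : ℝ) ≤ s)).card : ℝ) * (R - 1) ≤ aX := by
      have h1' : ∀ f ∈ F.filter (fun f => v ∈ f ∧ (f.card : ℝ) ≤ s), R - 1 ≤ (f.card : ℝ) - 1 := by
        intro f hf
        have hfF := (Finset.mem_filter.mp hf).1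
        have := hminsize f hfF
        linarith
      have := Finset.card_nsmul_le_sum (F.filter (fun f => v ∈ f ∧ (f.card : ℝ) ≤ s))
        (fun f => (f.card : ℝ) - 1) (R - 1) h1'
      rwa [nsmul_eq_mul] at this
    have h2 : ((F.filter (fun f => v ∈ f ∧ ¬((f.card : ℝ) ≤ s))).card : ℝ) * (s - 1)
        ≤ ((n : ℝ) - 1) - aX := by
      have hy : ((F.filter (fun f => v ∈ f ∧ ¬((f.card : ℝ) ≤ s))).card : ℝ) * (s - 1)
          ≤ ∑ f ∈ F.filter (fun f => v ∈ f ∧ ¬((f.card : ℝ) ≤ s)), ((f.card : ℝ) - 1) := by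
        have h2' : ∀ f ∈ F.filter (fun f => v ∈ f ∧ ¬((f.card : ℝ) ≤ s)), s - 1 ≤ (f.card : ℝ) - 1 := by
          intro f hf
          have := (Finset.mem_filter.mp hf).2.2
          push_neg at this
          linarith
        have := Finset.card_nsmul_le_sum (F.filter (fun f => v ∈ f ∧ ¬((f.card : ℝ) ≤ s)))
          (fun f => (f.card : ℝ) - 1) (s - 1) h2'
        rwa [nsmul_eq_mul] at this
      have hxy : aX + ∑ f ∈ F.filter (fun f => v ∈ f ∧ ¬((f.card : ℝ) ≤ s)), ((f.card : ℝ) - 1)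
          = ∑ f ∈ F.filter (fun f => v ∈ f), ((f.card : ℝ) - 1) := by
        rw [haX, hXv, hYv]
        exact Finset.sum_filter_add_sum_filter_not _ _ _
      have := mass_le F hlin hn v
      linarith
    have hcast : (((F.filter (fun g => v ∈ g)).card : ℝ))
        = ((F.filter (fun f => v ∈ f ∧ (f.card : ℝ) ≤ s)).card : ℝ)
          + ((F.filter (fun f => v ∈ f ∧ ¬((f.card : ℝ) ≤ s))).card : ℝ) := by
      exact_mod_cast hsplit
    rw [hcast]
    nlinarith [mul_le_mul_of_nonneg_left h1 hs1.le, mul_le_mul_of_nonneg_left h2 hR1.le]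
  -- sum over v ∈ e
  have hsum := Finset.sum_le_sum key
  have hdd : (degH F e : ℝ) ≤ ∑ v ∈ e, (((F.filter (fun g => v ∈ g)).card : ℝ)) := by
    have := deg_le_sum F e
    exact_mod_cast this
  have hL : (1 - τ) * n * (R - 1) * (s - 1)
      ≤ ∑ v ∈ e, (R - 1) * (s - 1) * (((F.filter (fun g => v ∈ g)).card : ℝ)) := by
    rw [← Finset.mul_sum]
    have h0 : (1 - τ) * n ≤ (degH F e : ℝ) := hdeg.le
    nlinarith [mul_le_mul_of_nonneg_left hdd (mul_pos hR1 hs1).le,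
      mul_le_mul_of_nonneg_left h0 (mul_pos hR1 hs1).le]
  have hRsum : ∑ v ∈ e, ((∑ f ∈ F.filter (fun f => v ∈ f ∧ (f.card : ℝ) ≤ s), ((f.card : ℝ) - 1)) * (s - R)
        + ((n : ℝ) - 1) * (R - 1))
      = (∑ v ∈ e, ∑ f ∈ F.filter (fun f => v ∈ f ∧ (f.card : ℝ) ≤ s), ((f.card : ℝ) - 1)) * (s - R)
        + (e.card : ℝ) * ((n : ℝ) - 1) * (R - 1) := by
    rw [Finset.sum_add_distrib, ← Finset.sum_mul, Finset.sum_const, nsmul_eq_mul]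
    ring
  linarith [hL.trans (hsum.trans_eq hRsum)]

lemma peel (τ : ℝ) (n : ℕ) (H : Finset (Finset (Fin n))) :
    ∃ (pos : Finset (Fin n) → ℕ) (F : Finset (Finset (Fin n))),
      F ⊆ H ∧ OrderOn H pos ∧
      (∀ f ∈ F, (1 - τ) * n < (degH F f : ℝ)) ∧
      (∀ f ∈ F, ∀ g ∈ H, g ∉ F → pos f < pos g) ∧
      (∀ g ∈ H, g ∉ F → (fwdDeg H pos g : ℝ) ≤ (1 - τ) * n) ∧
      (∀ e ∈ F, ∀ f ∈ F, pos f ≤ pos e → e.card ≤ f.card) ∧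
      (F.Nonempty → ∃ e₀ ∈ F, (∀ f ∈ F, pos f ≤ pos e₀) ∧ (∀ f ∈ F, e₀.card ≤ f.card)) := by
  induction H using Finset.strongInduction with
  | _ H ih =>
  by_cases hstuck : ∀ e ∈ H, (1 - τ) * n < (degH H e : ℝ)
  · -- H itself is stuck; sort it by decreasing size with a min-size edge last
    rcases H.eq_empty_or_nonempty with hHe | hHne
    · subst hHe
      exact ⟨fun _ => 0, ∅, by simp, by intro e he; simp at he, by simp, by simp, by simp,
        by simp, by simp⟩
    · obtain ⟨e₀, he₀, hmin⟩ := Finset.exists_min_image H (fun f => f.card) hHne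
      set C := Fintype.card (Finset (Fin n)) with hC
      have hCpos : 0 < C := Fintype.card_pos
      set enc : Finset (Fin n) → ℕ := fun f => ((Fintype.equivFin (Finset (Fin n))) f : ℕ)
        with henc
      have hencC : ∀ f, enc f < C := fun f => ((Fintype.equivFin (Finset (Fin n))) f).isLt
      have hencinj : Function.Injective enc := by
        intro f g h
        exact (Fintype.equivFin (Finset (Fin n))).injective (Fin.ext h)
      set key : Finset (Fin n) → ℕ :=
        fun f => 2 * (n + 1 - f.card) + (if f = e₀ then 1 else 0) with hkey
      set pos : Finset (Fin n) → ℕ := fun f => key f * C + enc f with hposdef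
      have hdiv : ∀ f, pos f / C = key f := by
        intro f
        show (key f * C + enc f) / C = key f
        rw [add_comm, mul_comm, Nat.add_mul_div_left _ _ hCpos, Nat.div_eq_of_lt (hencC f), zero_add]
      have hmod : ∀ f, pos f % C = enc f := by
        intro f
        show (key f * C + enc f) % C = enc f
        rw [add_comm, Nat.add_mul_mod_self_right, Nat.mod_eq_of_lt (hencC f)]
      have hposinj : Function.Injective pos := by
        intro f g h
        apply hencinj
        rw [← hmod f, ← hmod g, h]
      have hkeylt : ∀ f g, key f < key g → pos f < pos g := by
        intro f g h
        have h1 : pos f < (key f + 1) * C := by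
          show key f * C + enc f < (key f + 1) * C
          have := hencC f; nlinarith
        have h2 : (key f + 1) * C ≤ key g * C := Nat.mul_le_mul_right C h
        have h3 : key g * C ≤ pos g := Nat.le_add_right _ _
        omega
      have hub : ∀ g : Finset (Fin n), key g ≤ 2 * (n + 1 - g.card) + 1 := by
        intro g; simp only [hkey]; split <;> omega
      have hlb : ∀ g : Finset (Fin n), 2 * (n + 1 - g.card) ≤ key g := by
        intro g; simp only [hkey]; omega
      have hsorted : ∀ e ∈ H, ∀ f ∈ H, pos f ≤ pos e → e.card ≤ f.card := by
        intro e _ f _ hfe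
        have hk : key f ≤ key e := by
          by_contra hlt
          push_neg at hlt
          exact absurd (hkeylt e f hlt) (by omega)
        have h1 := card_le_n (n := n) e
        have h2 := card_le_n (n := n) f
        have h3 := hub e
        have h4 := hlb f
        omega
      have hmax : ∀ f ∈ H, pos f ≤ pos e₀ := by
        intro f hfH
        rcases eq_or_ne f e₀ with rfl | hne
        · exact le_refl _
        · apply le_of_lt
          apply hkeylt
          have e1 : key f = 2 * (n + 1 - f.card) := by
            simp [hkey, hne]
          have e2 : key e₀ = 2 * (n + 1 - e₀.card) + 1 := by
            simp [hkey]
          have h1 := hmin f hfH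
          have h2 := card_le_n (n := n) f
          have h3 := card_le_n (n := n) e₀
          omega
      refine ⟨pos, H, Finset.Subset.refl H, ?_, hstuck, ?_, ?_, hsorted, ?_⟩
      · intro a _ b _ hab; exact hposinj hab
      · intro f _ g hg hgH; exact absurd hg hgH
      · intro g hg hgH; exact absurd hg hgH
      · intro _
        exact ⟨e₀, he₀, fun f hf => hmax f hf, fun f hf => hmin f hf⟩
  · -- there is a peelable edge
    push_neg at hstuck
    obtain ⟨e, heH, hdegle'⟩ := hstuck
    have hsub : H.erase e ⊂ H := Finset.erase_ssubset heH
    obtain ⟨pos', F, hFsub, hord', hstk', hbefore', hfwd', hsorted', hmax'⟩ := ih (H.erase e) hsub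
    set N := 1 + (H.erase e).sup pos' with hN
    set pos : Finset (Fin n) → ℕ := fun f => if f = e then N else pos' f with hposdef
    have hposE : ∀ f ∈ H.erase e, pos f = pos' f := by
      intro f hf
      have : f ≠ e := (Finset.mem_erase.mp hf).1
      simp [hposdef, this]
    have hltN : ∀ f ∈ H.erase e, pos' f < N := by
      intro f hf
      have := Finset.le_sup (f := pos') hf
      omega
    have heF : e ∉ F := fun h => (Finset.mem_erase.mp (hFsub h)).1 rfl
    refine ⟨pos, F, hFsub.trans (Finset.erase_subset e H), ?_, hstk', ?_, ?_, ?_, ?_⟩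
    · -- OrderOn
      intro a ha b hb hab
      by_cases hae : a = e <;> by_cases hbe : b = e
      · rw [hae, hbe]
      · exfalso
        have hb' : b ∈ H.erase e := Finset.mem_erase.mpr ⟨hbe, hb⟩
        have h1 : pos a = N := by simp [hposdef, hae]
        have h2 : pos b = pos' b := hposE b hb'
        have := hltN b hb'
        omega
      · exfalso
        have ha' : a ∈ H.erase e := Finset.mem_erase.mpr ⟨hae, ha⟩
        have h1 : pos b = N := by simp [hposdef, hbe]
        have h2 : pos a = pos' a := hposE a ha'
        have := hltN a ha'
        omega
      · have ha' : a ∈ H.erase e := Finset.mem_erase.mpr ⟨hae, ha⟩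
        have hb' : b ∈ H.erase e := Finset.mem_erase.mpr ⟨hbe, hb⟩
        apply hord' a ha' b hb'
        rw [← hposE a ha', ← hposE b hb']; exact hab
    · -- F before non-F
      intro f hf g hg hgF
      have hf' : f ∈ H.erase e := hFsub hf
      by_cases hge : g = e
      · have h1 : pos g = N := by simp [hposdef, hge]
        have h2 : pos f = pos' f := hposE f hf'
        have := hltN f hf'
        omega
      · have hg' : g ∈ H.erase e := Finset.mem_erase.mpr ⟨hge, hg⟩
        rw [hposE f hf', hposE g hg']
        exact hbefore' f hf g hg' hgF
    · -- fwdDeg small for non-F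
      intro g hg hgF
      by_cases hge : g = e
      · have hdeg2 : (degH H g : ℝ) ≤ (1 - τ) * n := by rw [hge]; exact hdegle'
        refine le_trans ?_ hdeg2
        have hsubf : (H.filter fun f => pos f < pos g ∧ (f ∩ g).Nonempty) ⊆
            (H.filter fun f => f ≠ g ∧ (f ∩ g).Nonempty) := by
          intro f hf
          rcases Finset.mem_filter.mp hf with ⟨hfH, hlt, hint⟩
          refine Finset.mem_filter.mpr ⟨hfH, ?_, hint⟩
          intro hfe; rw [hfe] at hlt; omega
        have := Finset.card_le_card hsubf
        unfold fwdDeg degH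
        exact_mod_cast this
      · have hg' : g ∈ H.erase e := Finset.mem_erase.mpr ⟨hge, hg⟩
        have heq : fwdDeg H pos g = fwdDeg (H.erase e) pos' g := by
          unfold fwdDeg
          congr 1
          ext f
          simp only [Finset.mem_filter, Finset.mem_erase]
          constructor
          · rintro ⟨hfH, hlt, hint⟩
            by_cases hfe : f = e
            · exfalso
              have h1 : pos f = N := by simp [hposdef, hfe]
              have h2 : pos g = pos' g := hposE g hg'
              have := hltN g hg'
              omega
            · have hf' : f ∈ H.erase e := Finset.mem_erase.mpr ⟨hfe, hfH⟩
              refine ⟨⟨hfe, hfH⟩, ?_, hint⟩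
              rw [← hposE f hf', ← hposE g hg']; exact hlt
          · rintro ⟨⟨hfe, hfH⟩, hlt, hint⟩
            have hf' : f ∈ H.erase e := Finset.mem_erase.mpr ⟨hfe, hfH⟩
            refine ⟨hfH, ?_, hint⟩
            rw [hposE f hf', hposE g hg']; exact hlt
        rw [heq]
        exact hfwd' g hg' hgF
    · -- sorted on F
      intro a ha b hb hab
      apply hsorted' a ha b hb
      rw [← hposE a (hFsub ha), ← hposE b (hFsub hb)]; exact hab
    · -- max element
      intro hFne
      obtain ⟨e₀, he₀, hm1, hm2⟩ := hmax' hFne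
      refine ⟨e₀, he₀, ?_, hm2⟩
      intro f hf
      rw [hposE f (hFsub hf), hposE e₀ (hFsub he₀)]
      exact hm1 f hf


end Reorder

lemma arithA (τ ψ η x n R A a : ℝ)
    (hτ0 : 0 ≤ τ) (hτ1 : τ ≤ 1) (hψpos : 0 < ψ) (hηpos : 0 < η)
    (hη35 : η ≤ 3/5*x) (hxpos : 0 < x) (hR2 : 2 ≤ R)
    (hψη : ψ * η = τ)
    (h5 : 5*(ψ+1) ≤ x*R*ψ)
    (hstep : (1-τ)*n*(R-1)*((1+ψ)*R-1) ≤ A*((1+ψ)*R - R) + R*(n-1)*(R-1))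
    (hNR : R ≤ n)
    (hAa : A ≤ R * a) :
    (n-1)*(1-τ-x) ≤ a := by
  have hRpos : (0:ℝ) < R := by linarith
  have hR1 : (0:ℝ) < R - 1 := by linarith
  have hs1 : (0:ℝ) ≤ (1+ψ)*R-1 := by nlinarith
  have hA1 : (n-1)*(R-1)*((1-τ)*((1+ψ)*R-1) - R) ≤ A*(ψ*R) := by
    have c0 : (0:ℝ) ≤ (1-τ)*((R-1)*((1+ψ)*R-1)) :=
      mul_nonneg (by linarith) (mul_nonneg hR1.le hs1)
    nlinarith [hstep, c0]
  have hid1 : (1-τ)*((1+ψ)*R-1) - R = ψ*R*(1-τ-η) - (1-τ) := by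
    linear_combination R * hψη
  rw [hid1] at hA1
  have hkey1 : ψ*R^2*(1-τ-x) ≤ (R-1)*(ψ*R*(1-τ-η) - (1-τ)) := by
    have m1 : ψ*R^2*((2/5)*x) ≤ ψ*R^2*(x - η) :=
      mul_le_mul_of_nonneg_left (by linarith) (mul_nonneg hψpos.le (sq_nonneg R))
    have m3 : ψ*R*(1-τ-η) ≤ ψ*R := by nlinarith [mul_pos hψpos hRpos]
    have m4 : (R-1)*(1-τ) ≤ R := by nlinarith
    have m5 : (2/5)*R*(5*(ψ+1)) ≤ (2/5)*R*(x*R*ψ) :=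
      mul_le_mul_of_nonneg_left h5 (by linarith)
    nlinarith [m1, m3, m4, m5]
  have hc1 : (n-1)*(ψ*R^2*(1-τ-x)) ≤ (n-1)*((R-1)*(ψ*R*(1-τ-η) - (1-τ))) :=
    mul_le_mul_of_nonneg_left hkey1 (by linarith)
  have hc3 : A*(ψ*R) ≤ (R*a)*(ψ*R) :=
    mul_le_mul_of_nonneg_right hAa (mul_pos hψpos hRpos).le
  have hc4 : ((n-1)*(1-τ-x))*(ψ*R^2) ≤ a*(ψ*R^2) := by nlinarith [hc1, hA1, hc3]
  exact le_of_mul_le_mul_right hc4 (mul_pos hψpos (pow_pos hRpos 2))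

lemma arithB (τ δ ψ η x n R S gc : ℝ)
    (hτ0 : 0 ≤ τ) (hτ1 : τ ≤ 1) (hδpos : 0 < δ) (hψpos : 0 < ψ) (hηpos : 0 < η)
    (hη35 : η ≤ 3/5*x) (hxpos : 0 < x) (hR2 : 2 ≤ R) (hNR : R ≤ n)
    (hδη : δ * η = ψ) (h3τ : 3*τ ≤ x*δ) (h16 : 16*(2*δ+1) ≤ x*R*δ)
    (hgc : gc ≤ (1+ψ)*R)
    (hstep : (1-τ)*n*(R-1)*((1+δ)*R-1) ≤ S*((1+δ)*R - R) + gc*(n-1)*(R-1)) :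
    (n-1)*(R*(1-τ-x) + 1) ≤ S := by
  have hRpos : (0:ℝ) < R := by linarith
  have hR1 : (0:ℝ) < R - 1 := by linarith
  have hNpos : (0:ℝ) ≤ n - 1 := by linarith
  have hs1 : (0:ℝ) ≤ (1+δ)*R-1 := by nlinarith
  have e1 : (n-1)*(R-1)*((1-τ)*((1+δ)*R-1) - (1+ψ)*R) ≤ S*(δ*R) := by
    have c0 : (0:ℝ) ≤ (1-τ)*((R-1)*((1+δ)*R-1)) :=
      mul_nonneg (by linarith) (mul_nonneg hR1.le hs1)
    have cg : gc*((n-1)*(R-1)) ≤ ((1+ψ)*R)*((n-1)*(R-1)) :=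
      mul_le_mul_of_nonneg_right hgc (mul_nonneg hNpos hR1.le)
    nlinarith [hstep, c0, cg]
  have hid2 : (1-τ)*((1+δ)*R-1) - (1+ψ)*R = R*(δ*(1-τ-η) - τ) - (1-τ) := by
    linear_combination R * hδη
  rw [hid2] at e1
  have hkey2 : δ*R*(R*(1-τ-x) + 1) ≤ (R-1)*(R*(δ*(1-τ-η) - τ) - (1-τ)) := by
    have m1 : δ*R^2*((2/5)*x) ≤ δ*R^2*(x - η) :=
      mul_le_mul_of_nonneg_left (by linarith) (mul_nonneg hδpos.le (sq_nonneg R))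
    have m2 : R^2*(3*τ) ≤ R^2*(x*δ) := mul_le_mul_of_nonneg_left h3τ (sq_nonneg R)
    have m3 : R*(δ*(1-τ-η)) ≤ R*δ := by nlinarith [mul_pos hRpos hδpos]
    have m4 : (R-1)*(1-τ) ≤ R := by nlinarith
    have m5 : (1/15)*R*(16*(2*δ+1)) ≤ (1/15)*R*(x*R*δ) :=
      mul_le_mul_of_nonneg_left h16 (by linarith)
    nlinarith [m1, m2, m3, m4, m5, mul_pos hRpos hδpos]
  have c1 : (n-1)*(δ*R*(R*(1-τ-x) + 1)) ≤ (n-1)*((R-1)*(R*(δ*(1-τ-η) - τ) - (1-τ))) :=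
    mul_le_mul_of_nonneg_left hkey2 hNpos
  have c2 : ((n-1)*(R*(1-τ-x) + 1))*(δ*R) ≤ S*(δ*R) := by nlinarith [c1, e1]
  exact le_of_mul_le_mul_right c2 (mul_pos hδpos hRpos)

lemma arithC (ψ n R Q p a SW : ℝ)
    (hQpos : 0 < Q) (hRpos : 0 < R) (hψpos : 0 < ψ) (hNpos : 0 < n - 1)
    (havQ : (n-1)*Q ≤ a) (hpc : a ≤ p*((1+ψ)*R - 1)) (hppos : 0 ≤ p)
    (hSW1 : p*((n-1)*(R*Q)) ≤ SW) :
    (n-1)^2*Q^2 ≤ SW*(1+ψ) := by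
  have hp1 : (n-1)*Q ≤ p*((1+ψ)*R) := by nlinarith [hpc, hppos]
  have hc0 : (0:ℝ) ≤ (n-1)*(R*Q) :=
    mul_nonneg hNpos.le (mul_nonneg hRpos.le hQpos.le)
  have c1 : ((n-1)*Q)*((n-1)*(R*Q)) ≤ (p*((1+ψ)*R))*((n-1)*(R*Q)) :=
    mul_le_mul_of_nonneg_right hp1 hc0
  have c3 : (p*((n-1)*(R*Q)))*((1+ψ)*R) ≤ SW*((1+ψ)*R) :=
    mul_le_mul_of_nonneg_right hSW1 (by nlinarith [hψpos, hRpos])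
  have c4 : ((n-1)^2*Q^2)*R ≤ (SW*(1+ψ))*R := by nlinarith [c1, c3]
  exact le_of_mul_le_mul_right c4 hRpos

lemma arithD (τ x ψ δ n R SW : ℝ)
    (hτ0 : 0 ≤ τ) (hxpos : 0 < x) (hαx : 0 < 1-τ-7*x) (hx2R : 1 ≤ x^2*R)
    (hR2 : 2 ≤ R) (hNR : R ≤ n) (hψδ : ψ ≤ δ) (hSWnn : 0 ≤ SW)
    (hSWfin : (n-1)^2*(1-τ-x)^2 ≤ SW*(1+ψ)) :
    (1-τ-7*x)^2 * (n*(n-1)) ≤ SW*(1+δ) := by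
  have hNpos : (0:ℝ) < n - 1 := by linarith
  have hxN : (1:ℝ)/2 ≤ x^2*(n-1) := by
    nlinarith [hx2R, sq_nonneg x, mul_le_mul_of_nonneg_left hNR (sq_nonneg x),
      mul_nonneg (sq_nonneg x) (show (0:ℝ) ≤ R - 2 by linarith)]
  have hα1 : 1-τ-7*x ≤ 1 := by nlinarith
  have f2 : (1-τ-7*x)^2*n ≤ (1-τ-x)^2*(n-1) := by
    nlinarith [hxN, hα1, hαx, hxpos.le, hNpos,
      mul_nonneg (mul_nonneg hαx.le hxpos.le) hNpos.le]
  have f3 : (1-τ-7*x)^2*(n*(n-1)) ≤ (1-τ-x)^2*(n-1)^2 := by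
    nlinarith [mul_le_mul_of_nonneg_right f2 hNpos.le]
  have f1 : SW*(1+ψ) ≤ SW*(1+δ) :=
    mul_le_mul_of_nonneg_left (by linarith) hSWnn
  linarith

noncomputable def r1def (τ K : ℝ) : ℕ :=
  3 + ⌈5 * (1 + 1 / Real.sqrt (τ * (3 * τ ^ ((1:ℝ)/4) * K ^ 4))) * K / τ ^ ((1:ℝ)/4)⌉₊
    + ⌈16 * (1 / (3 * τ ^ ((1:ℝ)/4) * K ^ 4) + 2) * K / τ ^ ((1:ℝ)/4)⌉₊
    + ⌈K ^ 2 / (τ ^ ((1:ℝ)/4)) ^ 2⌉₊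

-- constant facts bundle
lemma const_facts (τ K : ℝ) (hτ0 : 0 < τ) (hτ1 : τ < 1) (hK : 1 ≤ K)
    (hpos : 0 < 1 - τ - 7 * τ ^ ((1 : ℝ) / 4) / K) :
    ∀ θ δ ψ η x : ℝ, θ = τ ^ ((1:ℝ)/4) → δ = 3 * θ * K ^ 4 → ψ = Real.sqrt (τ * δ) →
      η = ψ / δ → x = θ / K →
      (0 < θ ∧ θ < 1) ∧ (0 < δ) ∧ (0 < ψ ∧ ψ ≤ δ) ∧ (0 < η ∧ η ≤ (3/5) * x) ∧
        (0 < x ∧ x ≤ 1) ∧ (ψ * η = τ) ∧ (δ * η = ψ) ∧ (3 * τ ≤ x * δ) ∧ (τ ≤ θ)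
        ∧ (0 < 1 - τ - 7 * x) := by
  intro θ δ ψ η x hθ hδ hψ hη hx
  have hKpos : (0:ℝ) < K := lt_of_lt_of_le one_pos hK
  have hθpos : 0 < θ := hθ ▸ Real.rpow_pos_of_pos hτ0 _
  have hθlt1 : θ < 1 := hθ ▸ Real.rpow_lt_one hτ0.le hτ1 (by norm_num)
  have hθ4 : θ ^ 4 = τ := by
    rw [hθ, ← Real.rpow_natCast (τ ^ ((1:ℝ)/4)) 4, ← Real.rpow_mul hτ0.le]
    norm_num
  have hδpos : 0 < δ := by rw [hδ]; positivity
  have hτδpos : 0 < τ * δ := by positivity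
  have hψpos : 0 < ψ := hψ ▸ Real.sqrt_pos.mpr hτδpos
  have hψsq : ψ ^ 2 = τ * δ := hψ ▸ Real.sq_sqrt hτδpos.le
  have hηpos : 0 < η := by rw [hη]; positivity
  have hxpos : 0 < x := by rw [hx]; positivity
  have hθ2 : θ ^ 2 ≤ 1 := by nlinarith [hθpos.le, hθlt1.le]
  have hθ3 : θ ^ 3 ≤ 1 := by nlinarith [hθ2, hθpos.le, hθlt1.le]
  have hθ3pos : 0 < θ ^ 3 := by positivity
  have hθ43 : θ ^ 4 ≤ θ ^ 3 := by
    nlinarith [mul_nonneg hθ3pos.le (show (0:ℝ) ≤ 1 - θ by linarith)]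
  have hθ42 : θ ^ 4 ≤ θ ^ 2 := by
    nlinarith [mul_nonneg (sq_nonneg θ) (show (0:ℝ) ≤ 1 - θ^2 by linarith)]
  have hK2 : (1:ℝ) ≤ K ^ 2 := by nlinarith [hK]
  have hK3 : (1:ℝ) ≤ K ^ 3 := by nlinarith [hK2, hK, hKpos]
  have hK4 : (1:ℝ) ≤ K ^ 4 := by nlinarith [hK2]
  have hτθ : τ ≤ θ := by
    nlinarith [mul_le_mul_of_nonneg_left hθ3 hθpos.le, hθ4]
  have hτδ : τ ≤ δ := by
    have h1 : θ ≤ δ := by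
      rw [hδ]
      nlinarith [mul_le_mul_of_nonneg_left hK4 hθpos.le]
    linarith
  have hψδ : ψ ≤ δ := by
    have h1 : ψ ^ 2 ≤ δ ^ 2 := by rw [hψsq]; nlinarith [hδpos]
    nlinarith [hψpos, hδpos]
  have hδη : δ * η = ψ := by
    rw [hη, mul_comm, div_mul_cancel₀ ψ (ne_of_gt hδpos)]
  have hψη : ψ * η = τ := by
    rw [hη, mul_div_assoc', div_eq_iff (ne_of_gt hδpos)]
    nlinarith [hψsq]
  have hx1 : x ≤ 1 := by
    rw [hx, div_le_one hKpos]; linarith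
  have hη35 : η ≤ (3/5) * x := by
    have h1 : η ^ 2 * δ = τ := by
      calc η ^ 2 * δ = η * (δ * η) := by ring
        _ = η * ψ := by rw [hδη]
        _ = τ := by rw [mul_comm]; exact hψη
    have hxδ : x * δ = 3 * θ ^ 2 * K ^ 3 := by
      rw [hx, hδ]; field_simp
    have h25 : 25 * τ ≤ 9 * (x ^ 2 * δ) := by
      have e1 : x ^ 2 * δ = 3 * θ ^ 3 * K ^ 2 := by
        rw [hx, hδ]; field_simp
      rw [e1, ← hθ4]
      nlinarith [hθ43, mul_le_mul_of_nonneg_left hK2 hθ3pos.le]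
    have hsq : η ^ 2 ≤ (9/25) * x ^ 2 := by
      nlinarith [h1, h25, hδpos]
    nlinarith [hsq, hηpos, hxpos]
  have h3τ : 3 * τ ≤ x * δ := by
    have hxδ : x * δ = 3 * θ ^ 2 * K ^ 3 := by rw [hx, hδ]; field_simp
    have hθ2pos : (0:ℝ) < θ ^ 2 := by positivity
    rw [hxδ, ← hθ4]
    nlinarith [hθ42, mul_le_mul_of_nonneg_left hK3 hθ2pos.le]
  have hαx : 0 < 1 - τ - 7 * x := by
    have : 7 * x = 7 * θ / K := by rw [hx]; ring
    rw [this]; rw [hθ]; exact hpos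
  exact ⟨⟨hθpos, hθlt1⟩, hδpos, ⟨hψpos, hψδ⟩, ⟨hηpos, hη35⟩, ⟨hxpos, hx1⟩, hψη, hδη, h3τ, hτθ, hαx⟩

namespace Reorder
variable {n : ℕ}

lemma core (τ K : ℝ) (hτ0 : 0 < τ) (hτ1 : τ < 1) (hK : 1 ≤ K)
    (hpos : 0 < 1 - τ - 7 * τ ^ ((1 : ℝ) / 4) / K)
    (F : Finset (Finset (Fin n))) (hlin : LinearHG F)
    (hmin : ∀ f ∈ F, r1def τ K ≤ f.card)
    (hstuck : ∀ f ∈ F, (1 - τ) * n < (degH F f : ℝ))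
    (e₀ : Finset (Fin n)) (he₀ : e₀ ∈ F)
    (hms : ∀ f ∈ F, e₀.card ≤ f.card) :
    (1 - τ - 7 * τ ^ ((1 : ℝ) / 4) / K) ^ 2 / (1 + 3 * τ ^ ((1 : ℝ) / 4) * K ^ 4)
      ≤ volHG (F.filter fun f => (f.card : ℝ) ≤ (1 + 3 * τ ^ ((1 : ℝ) / 4) * K ^ 4) * e₀.card) := by
  classical
  obtain ⟨⟨hθpos, hθlt1⟩, hδpos, ⟨hψpos, hψδ⟩, ⟨hηpos, hη35⟩, ⟨hxpos, hx1⟩, hψη, hδη, h3τ, hτθ, hαx⟩ :=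
    const_facts τ K hτ0 hτ1 hK hpos (τ ^ ((1:ℝ)/4)) (3 * τ ^ ((1:ℝ)/4) * K ^ 4)
      (Real.sqrt (τ * (3 * τ ^ ((1:ℝ)/4) * K ^ 4)))
      (Real.sqrt (τ * (3 * τ ^ ((1:ℝ)/4) * K ^ 4)) / (3 * τ ^ ((1:ℝ)/4) * K ^ 4))
      (τ ^ ((1:ℝ)/4) / K) rfl rfl rfl rfl rfl
  have hKpos : (0:ℝ) < K := lt_of_lt_of_le one_pos hK
  set θ := τ ^ ((1:ℝ)/4) with hθ
  set δ := 3 * θ * K ^ 4 with hδ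
  set ψ := Real.sqrt (τ * δ) with hψ
  set η := ψ / δ with hη
  set x := θ / K with hx
  have hRnat := hmin e₀ he₀
  set R := ((e₀.card : ℕ) : ℝ) with hR
  have hr1R : (r1def τ K : ℝ) ≤ R := by rw [hR]; exact_mod_cast hRnat
  have hcomp1 : 5 * (1 + 1/ψ) * K / θ ≤ R := by
    refine le_trans (le_trans (Nat.le_ceil _) ?_) hr1R
    have h2 : (⌈5 * (1 + 1/ψ) * K / θ⌉₊ : ℕ) ≤ r1def τ K := by
      rw [hψ, hδ, hθ]
      unfold r1def
      omega
    exact_mod_cast h2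
  have hcomp2 : 16 * (1/δ + 2) * K / θ ≤ R := by
    refine le_trans (le_trans (Nat.le_ceil _) ?_) hr1R
    have h2 : (⌈16 * (1/δ + 2) * K / θ⌉₊ : ℕ) ≤ r1def τ K := by
      rw [hδ, hθ]
      unfold r1def
      omega
    exact_mod_cast h2
  have hcomp3 : K ^ 2 / θ ^ 2 ≤ R := by
    refine le_trans (le_trans (Nat.le_ceil _) ?_) hr1R
    have h2 : (⌈K ^ 2 / θ ^ 2⌉₊ : ℕ) ≤ r1def τ K := by
      rw [hθ]
      unfold r1def
      omega
    exact_mod_cast h2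
  have hR3 : (3:ℝ) ≤ R := by
    refine le_trans ?_ hr1R
    have : (3:ℕ) ≤ r1def τ K := by unfold r1def; omega
    exact_mod_cast this
  have hR2 : (2:ℝ) ≤ R := by linarith only [hR3]
  have hRpos : (0:ℝ) < R := by linarith only [hR2]
  have hcard3 : 3 ≤ e₀.card := by
    have : ((3:ℕ):ℝ) ≤ ((e₀.card : ℕ) : ℝ) := by rw [← hR]; exact_mod_cast hR3
    exact_mod_cast this
  have he₀ne : e₀.Nonempty := Finset.card_pos.mp (by omega)
  have hnn : e₀.card ≤ n := card_le_n e₀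
  have hn1 : 1 ≤ n := by omega
  have hNR : R ≤ (n:ℝ) := by rw [hR]; exact_mod_cast hnn
  have hNpos : (0:ℝ) < (n:ℝ) - 1 := by linarith only [hNR, hR2]
  have hminR : ∀ f ∈ F, R ≤ (f.card:ℝ) := by
    intro f hf; rw [hR]; exact_mod_cast hms f hf
  have h5 : 5*(ψ+1) ≤ x*R*ψ := by
    have h1 : 5 * (1 + 1/ψ) * K / θ = 5*(1+1/ψ)/x := by
      rw [hx, div_div_eq_mul_div]
    have h3 : 5*(1+1/ψ) ≤ R*x := (div_le_iff₀ hxpos).mp (h1 ▸ hcomp1)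
    have h4 : 5*(1+1/ψ)*ψ = 5*(ψ+1) := by
      first
      | (field_simp; ring)
      | field_simp
    calc 5*(ψ+1) = 5*(1+1/ψ)*ψ := h4.symm
      _ ≤ (R*x)*ψ := mul_le_mul_of_nonneg_right h3 hψpos.le
      _ = x*R*ψ := by ring
  have h16 : 16*(2*δ+1) ≤ x*R*δ := by
    have h1 : 16 * (1/δ + 2) * K / θ = 16*(1/δ+2)/x := by
      rw [hx, div_div_eq_mul_div]
    have h3 : 16*(1/δ+2) ≤ R*x := (div_le_iff₀ hxpos).mp (h1 ▸ hcomp2)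
    have h4 : 16*(1/δ+2)*δ = 16*(2*δ+1) := by
      first
      | (field_simp; ring)
      | field_simp
    calc 16*(2*δ+1) = 16*(1/δ+2)*δ := h4.symm
      _ ≤ (R*x)*δ := mul_le_mul_of_nonneg_right h3 hδpos.le
      _ = x*R*δ := by ring
  have hx2R : 1 ≤ x^2*R := by
    have h1 : K ^ 2 / θ ^ 2 = 1/x^2 := by
      rw [hx, div_pow, one_div_div]
    have h3 : 1 ≤ R*(x^2) := (div_le_iff₀ (by positivity)).mp (h1 ▸ hcomp3)
    nlinarith only [h3]
  -- Step 1 at e₀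
  have hstep1 := step_ineq τ hτ1 F hlin hn1 R hR2 hminR e₀ he₀ (hstuck e₀ he₀) ((1+ψ)*R)
    (by nlinarith only [hψpos, hRpos])
  rw [← hR] at hstep1
  set A := ∑ v ∈ e₀, ∑ f ∈ F.filter (fun f => v ∈ f ∧ (f.card : ℝ) ≤ (1 + ψ) * R), ((f.card : ℝ) - 1) with hA
  have hAex : ∃ v ∈ e₀, A ≤ R * (∑ f ∈ F.filter (fun f => v ∈ f ∧ (f.card : ℝ) ≤ (1 + ψ) * R), ((f.card : ℝ) - 1)) := by
    by_contra hcon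
    push_neg at hcon
    have h1 : ∑ v ∈ e₀, R * (∑ f ∈ F.filter (fun f => v ∈ f ∧ (f.card : ℝ) ≤ (1 + ψ) * R), ((f.card : ℝ) - 1)) < ∑ v ∈ e₀, A :=
      Finset.sum_lt_sum_of_nonempty he₀ne (fun v hv => hcon v hv)
    rw [← Finset.mul_sum, Finset.sum_const, nsmul_eq_mul, ← hR, ← hA] at h1
    exact absurd h1 (lt_irrefl _)
  obtain ⟨vs, hvsmem, hAvs⟩ := hAex
  set av := ∑ f ∈ F.filter (fun f => vs ∈ f ∧ (f.card : ℝ) ≤ (1 + ψ) * R), ((f.card : ℝ) - 1) with hav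
  have havQ : ((n:ℝ)-1)*(1-τ-x) ≤ av :=
    arithA τ ψ η x ((n:ℝ)) R A av hτ0.le hτ1.le hψpos hηpos hη35 hxpos hR2 hψη h5 hstep1
      hNR hAvs
  -- pencil at vs
  set P := F.filter (fun g => vs ∈ g ∧ (g.card : ℝ) ≤ (1 + ψ) * R) with hP
  have hcovg : ∀ g ∈ P, ((n:ℝ)-1)*(R*(1-τ-x)) ≤ ∑ u ∈ g.erase vs, (∑ f ∈ F.filter (fun f => u ∈ f ∧ (f.card : ℝ) ≤ (1 + δ) * R), ((f.card : ℝ) - 1)) := by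
    intro g hgP
    have hgmem := Finset.mem_filter.mp hgP
    have hgF : g ∈ F := hgmem.1
    have hvg : vs ∈ g := hgmem.2.1
    have hgcard : (g.card : ℝ) ≤ (1+ψ)*R := hgmem.2.2
    have hstep2 := step_ineq τ hτ1 F hlin hn1 R hR2 hminR g hgF (hstuck g hgF) ((1+δ)*R)
      (by nlinarith only [hδpos, hRpos])
    have hSWg2 : ((n:ℝ)-1)*(R*(1-τ-x) + 1) ≤ ∑ v ∈ g, ∑ f ∈ F.filter (fun f => v ∈ f ∧ (f.card : ℝ) ≤ (1 + δ) * R), ((f.card : ℝ) - 1) :=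
      arithB τ δ ψ η x ((n:ℝ)) R (∑ v ∈ g, ∑ f ∈ F.filter (fun f => v ∈ f ∧ (f.card : ℝ) ≤ (1 + δ) * R), ((f.card : ℝ) - 1)) ((g.card:ℝ)) hτ0.le hτ1.le hδpos hψpos
        hηpos hη35 hxpos hR2 hNR hδη h3τ h16 hgcard hstep2
    have hwvs : ∑ f ∈ F.filter (fun f => vs ∈ f ∧ (f.card : ℝ) ≤ (1 + δ) * R), ((f.card : ℝ) - 1) ≤ (n:ℝ)-1 := by
      have hsub : F.filter (fun f => vs ∈ f ∧ (f.card : ℝ) ≤ (1 + δ) * R)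
          ⊆ F.filter (fun f => vs ∈ f) := by
        intro f hf
        rcases Finset.mem_filter.mp hf with ⟨h1, h2, _⟩
        exact Finset.mem_filter.mpr ⟨h1, h2⟩
      refine le_trans (Finset.sum_le_sum_of_subset_of_nonneg hsub ?_) (mass_le F hlin hn1 vs)
      intro f hf _
      have h1 : 1 ≤ f.card := Finset.card_pos.mpr ⟨vs, (Finset.mem_filter.mp hf).2⟩
      have h2 : (1:ℝ) ≤ (f.card : ℝ) := by exact_mod_cast h1
      linarith only [h2]
    have hsp : (∑ u ∈ g.erase vs, ∑ f ∈ F.filter (fun f => u ∈ f ∧ (f.card : ℝ) ≤ (1 + δ) * R), ((f.card : ℝ) - 1)) + (∑ f ∈ F.filter (fun f => vs ∈ f ∧ (f.card : ℝ) ≤ (1 + δ) * R), ((f.card : ℝ) - 1)) = ∑ u ∈ g, ∑ f ∈ F.filter (fun f => u ∈ f ∧ (f.card : ℝ) ≤ (1 + δ) * R), ((f.card : ℝ) - 1) :=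
      Finset.sum_erase_add g _ hvg
    linarith only [hSWg2, hwvs, hsp]
  have hpcount : av ≤ (P.card:ℝ)*((1+ψ)*R - 1) := by
    have hball : ∀ g ∈ P, (g.card:ℝ) - 1 ≤ (1+ψ)*R - 1 := by
      intro g hg
      have h0 := (Finset.mem_filter.mp hg).2.2
      linarith only [h0]
    have h := Finset.sum_le_card_nsmul P (fun g => (g.card:ℝ)-1) ((1+ψ)*R - 1) hball
    rw [nsmul_eq_mul] at h
    exact le_trans (le_of_eq hav) h
  set SW := ∑ u : Fin n, (∑ f ∈ F.filter (fun f => u ∈ f ∧ (f.card : ℝ) ≤ (1 + δ) * R), ((f.card : ℝ) - 1)) with hSW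
  have hwnn : ∀ u : Fin n, (0:ℝ) ≤ ∑ f ∈ F.filter (fun f => u ∈ f ∧ (f.card : ℝ) ≤ (1 + δ) * R), ((f.card : ℝ) - 1) := by
    intro u
    apply Finset.sum_nonneg
    intro f hf
    have h1 : 1 ≤ f.card := Finset.card_pos.mpr ⟨u, (Finset.mem_filter.mp hf).2.1⟩
    have h2 : (1:ℝ) ≤ (f.card : ℝ) := by exact_mod_cast h1
    linarith only [h2]
  have hcovsum : ∑ g ∈ P, ∑ u ∈ g.erase vs, (∑ f ∈ F.filter (fun f => u ∈ f ∧ (f.card : ℝ) ≤ (1 + δ) * R), ((f.card : ℝ) - 1)) ≤ SW := by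
    have hdisj : (↑P : Set (Finset (Fin n))).PairwiseDisjoint (fun g => g.erase vs) := by
      intro g hg g' hg' hne
      have hg1 := Finset.mem_filter.mp (Finset.mem_coe.mp hg)
      have hg2 := Finset.mem_filter.mp (Finset.mem_coe.mp hg')
      exact erase_disjoint hlin hg1.1 hg2.1 hg1.2.1 hg2.2.1 hne
    have heq : ∑ g ∈ P, ∑ u ∈ g.erase vs, (∑ f ∈ F.filter (fun f => u ∈ f ∧ (f.card : ℝ) ≤ (1 + δ) * R), ((f.card : ℝ) - 1))
        = ∑ u ∈ P.biUnion (fun g => g.erase vs), (∑ f ∈ F.filter (fun f => u ∈ f ∧ (f.card : ℝ) ≤ (1 + δ) * R), ((f.card : ℝ) - 1)) := (Finset.sum_biUnion hdisj).symm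
    rw [heq, hSW]
    refine Finset.sum_le_sum_of_subset_of_nonneg (Finset.subset_univ _) ?_
    intro u _ _
    exact hwnn u
  have hSW1 : (P.card:ℝ)*(((n:ℝ)-1)*(R*(1-τ-x))) ≤ SW := by
    have h := Finset.card_nsmul_le_sum P (fun g => ∑ u ∈ g.erase vs, (∑ f ∈ F.filter (fun f => u ∈ f ∧ (f.card : ℝ) ≤ (1 + δ) * R), ((f.card : ℝ) - 1)))
      (((n:ℝ)-1)*(R*(1-τ-x))) hcovg
    rw [nsmul_eq_mul] at h
    linarith only [hcovsum, h]
  have hQpos : (0:ℝ) < 1-τ-x := by nlinarith only [hαx, hxpos]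
  have hSWnn : (0:ℝ) ≤ SW := by
    rw [hSW]; exact Finset.sum_nonneg (fun u _ => hwnn u)
  have hSWfin : ((n:ℝ)-1)^2*(1-τ-x)^2 ≤ SW*(1+ψ) :=
    arithC ψ ((n:ℝ)) R (1-τ-x) ((P.card:ℝ)) av SW hQpos hRpos hψpos hNpos havQ hpcount
      (Nat.cast_nonneg P.card) hSW1
  -- volume identity
  set W := F.filter (fun f => (f.card : ℝ) ≤ (1 + δ) * R) with hW
  have hSWsum : SW = ∑ f ∈ W, (f.card:ℝ)*((f.card:ℝ)-1) := by
    rw [hSW]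
    have h1 : ∀ u : Fin n, (∑ f ∈ F.filter (fun f => u ∈ f ∧ (f.card : ℝ) ≤ (1 + δ) * R), ((f.card : ℝ) - 1))
        = ∑ f ∈ W, (if u ∈ f then (f.card:ℝ)-1 else 0) := by
      intro u
      rw [← Finset.sum_filter]
      congr 1
      rw [hW, Finset.filter_filter]
      apply Finset.filter_congr
      intro f _
      constructor
      · rintro ⟨h1, h2⟩; exact ⟨h2, h1⟩
      · rintro ⟨h1, h2⟩; exact ⟨h2, h1⟩
    calc ∑ u : Fin n, (∑ f ∈ F.filter (fun f => u ∈ f ∧ (f.card : ℝ) ≤ (1 + δ) * R), ((f.card : ℝ) - 1))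
        = ∑ u : Fin n, ∑ f ∈ W, (if u ∈ f then (f.card:ℝ)-1 else 0) :=
          Finset.sum_congr rfl (fun u _ => h1 u)
      _ = ∑ f ∈ W, ∑ u : Fin n, (if u ∈ f then (f.card:ℝ)-1 else 0) := Finset.sum_comm
      _ = ∑ f ∈ W, (f.card:ℝ)*((f.card:ℝ)-1) := by
          apply Finset.sum_congr rfl
          intro f _
          rw [Finset.sum_ite_mem, Finset.univ_inter, Finset.sum_const, nsmul_eq_mul]
  have hNNpos : (0:ℝ) < (n:ℝ)*((n:ℝ)-1) := by nlinarith only [hNpos, hNR, hRpos]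
  have hvol : volHG W = SW / ((n:ℝ)*((n:ℝ)-1)) := by
    have hnum : ∑ e ∈ W, ((e.card.choose 2 : ℕ):ℝ)
        = (∑ f ∈ W, (f.card:ℝ)*((f.card:ℝ)-1))/2 := by
      rw [Finset.sum_div]
      apply Finset.sum_congr rfl
      intro f _
      rw [Nat.cast_choose_two]
    have hden : ((n.choose 2 : ℕ):ℝ) = ((n:ℝ)*((n:ℝ)-1))/2 := by
      rw [Nat.cast_choose_two]
    show (∑ e ∈ W, ((e.card.choose 2 : ℕ):ℝ)) / ((n.choose 2 : ℕ):ℝ) = SW / ((n:ℝ)*((n:ℝ)-1))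
    rw [hnum, hden, ← hSWsum]
    rw [div_div_div_cancel_right₀]
    exact two_ne_zero
  rw [hvol]
  have hαeq : 1 - τ - 7 * θ / K = 1 - τ - 7 * x := by rw [hx]; ring
  rw [hαeq]
  rw [div_le_div_iff₀ (by linarith only [hδpos]) hNNpos]
  exact arithD τ x ψ δ ((n:ℝ)) R SW hτ0.le hxpos hαx hx2R hR2 hNR hψδ hSWnn hSWfin

end Reorder

/-- The Reordering Lemma. -/
theorem reordering_lemma (τ K : ℝ) (hτ0 : 0 < τ) (hτ1 : τ < 1) (hK : 1 ≤ K)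
    (hpos : 0 < 1 - τ - 7 * τ ^ ((1 : ℝ) / 4) / K) :
    ∃ r1 : ℕ, ∀ n : ℕ, ∀ H : Finset (Finset (Fin n)),
      LinearHG H → (∀ e ∈ H, r1 ≤ e.card) →
      ∃ pos : Finset (Fin n) → ℕ, OrderOn H pos ∧
        ((∀ e ∈ H, (fwdDeg H pos e : ℝ) ≤ (1 - τ) * n) ∨
          (∃ W ⊆ H, ∃ estar ∈ W,
            -- (W1)
            (∀ e ∈ W, ∀ f ∈ W,
              (e.card : ℝ) ≤ (1 + 3 * τ ^ ((1 : ℝ) / 4) * K ^ 4) * (f.card : ℝ)) ∧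
            -- (W2)
            (1 - τ - 7 * τ ^ ((1 : ℝ) / 4) / K) ^ 2 / (1 + 3 * τ ^ ((1 : ℝ) / 4) * K ^ 4)
              ≤ volHG W ∧
            -- estar is the last edge of W
            (∀ e ∈ W, pos e ≤ pos estar) ∧
            -- (O1)
            (∀ f ∈ H, pos estar < pos f → (fwdDeg H pos f : ℝ) ≤ (1 - τ) * n) ∧
            -- (O2)
            (∀ e ∈ H, ∀ f ∈ H, pos f ≤ pos e → pos e ≤ pos estar → e.card ≤ f.card))) := by
  classical
  refine ⟨r1def τ K, ?_⟩
  intro n H hlin hcard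
  obtain ⟨pos, F, hFH, hord, hstk, hbefore, hfwd, hsorted, hmax⟩ := Reorder.peel τ n H
  rcases F.eq_empty_or_nonempty with hFe | hFne
  · exact ⟨pos, hord, Or.inl (fun e he => hfwd e he (by simp [hFe]))⟩
  · obtain ⟨e₀, he₀F, hm1, hm2⟩ := hmax hFne
    have hlinF : LinearHG F := fun e he f hf hne => hlin e (hFH he) f (hFH hf) hne
    have hminF : ∀ f ∈ F, r1def τ K ≤ f.card := fun f hf => hcard f (hFH hf)
    have hcore := Reorder.core τ K hτ0 hτ1 hK hpos F hlinF hminF hstk e₀ he₀F hm2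
    have hθnn : (0:ℝ) ≤ τ ^ ((1:ℝ)/4) := Real.rpow_nonneg hτ0.le _
    have hKnn : (0:ℝ) ≤ K ^ 4 := by positivity
    have hcoef : (1:ℝ) ≤ 1 + 3 * τ ^ ((1 : ℝ) / 4) * K ^ 4 := by
      have h0 : (0:ℝ) ≤ 3 * τ ^ ((1 : ℝ) / 4) * K ^ 4 :=
        mul_nonneg (mul_nonneg (by norm_num) hθnn) hKnn
      linarith only [h0]
    refine ⟨pos, hord, Or.inr
      ⟨F.filter (fun f => (f.card:ℝ) ≤ (1 + 3 * τ ^ ((1 : ℝ) / 4) * K ^ 4) * e₀.card),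
        (Finset.filter_subset _ _).trans hFH, e₀, ?_, ?_, hcore, ?_, ?_, ?_⟩⟩
    · refine Finset.mem_filter.mpr ⟨he₀F, ?_⟩
      have h0 : (0:ℝ) ≤ (e₀.card : ℝ) := Nat.cast_nonneg _
      nlinarith only [h0, hcoef]
    · intro e he f hf
      have he' := Finset.mem_filter.mp he
      have hf' := Finset.mem_filter.mp hf
      have h1 : (e₀.card:ℝ) ≤ (f.card:ℝ) := by exact_mod_cast hm2 f hf'.1
      calc (e.card:ℝ) ≤ (1 + 3 * τ ^ ((1 : ℝ) / 4) * K ^ 4) * e₀.card := he'.2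
        _ ≤ (1 + 3 * τ ^ ((1 : ℝ) / 4) * K ^ 4) * f.card :=
            mul_le_mul_of_nonneg_left h1 (by linarith only [hcoef])
    · intro e he
      exact hm1 e (Finset.mem_filter.mp he).1
    · intro f hf hlt
      refine hfwd f hf ?_
      intro hfF
      have := hm1 f hfF
      omega
    · intro e he f hf hfe hee0
      have heF : e ∈ F := by
        by_contra heF
        have := hbefore e₀ he₀F e he heF
        omega
      have hfF : f ∈ F := by
        by_contra hfF
        have := hbefore e₀ he₀F f hf hfF
        omega
      exact hsorted e heF f hfF hfe
end

section
/- Let α1, α2, τ ≥ 0, and let H be an n-vertex linear hypergraph in which every edge f satisfies |f| ≥ 1 + α2. Let e ∈ E(H), set r := |e|, let m1 be the number of edges f ∈ N(e) with |f| ≥ (1+α1)r, and let m2 be the number of edges f ∈ N(e) with r/(1+α2) ≤ |f| < (1+α1)r. If r > 1 + α2, then (i) (1+α1)·m1 + m2/(1+α2) ≤ n + (1+α2)n/(r − 1 − α2). Moreover, if additionally m1 + m2 ≥ (1−τ)n and α1 > 0, then (ii) m1 ≤ (τ + (1+α2)(1+α2·r)/(r − 1 − α2)) · n/α1. -/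
open Finset
open scoped Classical

lemma vertex_sum_aux {n : ℕ} (H : Finset (Finset (Fin n))) (hlin : LinearHG H) (v : Fin n)
    (T : Finset (Finset (Fin n))) (hT : T ⊆ H) (hv : ∀ f ∈ T, v ∈ f) :
    ∑ f ∈ T, (f.card - 1) ≤ n := by
  have hdisj : ∀ f ∈ T, ∀ g ∈ T, f ≠ g → Disjoint (f.erase v) (g.erase v) := by
    intro f hf g hg hfg
    have h1 : (f ∩ g).card ≤ 1 := hlin f (hT hf) g (hT hg) hfg
    have hvm : v ∈ f ∩ g := mem_inter.2 ⟨hv f hf, hv g hg⟩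
    rw [Finset.disjoint_left]
    intro a haf hag
    have haf' := Finset.mem_erase.mp haf
    have hag' := Finset.mem_erase.mp hag
    have ham : a ∈ f ∩ g := mem_inter.2 ⟨haf'.2, hag'.2⟩
    exact haf'.1 (Finset.card_le_one.mp h1 a ham v hvm)
  calc ∑ f ∈ T, (f.card - 1)
      = ∑ f ∈ T, (f.erase v).card := by
        refine sum_congr rfl fun f hf => ?_
        rw [card_erase_of_mem (hv f hf)]
    _ = (T.biUnion (fun f => f.erase v)).card := (card_biUnion hdisj).symm
    _ ≤ (univ : Finset (Fin n)).card := card_le_card (subset_univ _)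
    _ = n := by simp

/-- Degree bounds on the neighbourhood of an edge in a linear hypergraph. -/
theorem edge_neighbourhood_size_bounds
    (n : ℕ) (α1 α2 τ : ℝ) (hα1 : 0 ≤ α1) (hα2 : 0 ≤ α2) (hτ : 0 ≤ τ)
    (H : Finset (Finset (Fin n))) (hlin : LinearHG H)
    (hsize : ∀ f ∈ H, (1 : ℝ) + α2 ≤ (f.card : ℝ))
    (e : Finset (Fin n)) (he : e ∈ H)
    (r : ℕ) (hr : r = e.card)
    (m1 m2 : ℕ)
    (hm1 : m1 = (H.filter fun f =>
      f ≠ e ∧ (f ∩ e).Nonempty ∧ (1 + α1) * (r : ℝ) ≤ (f.card : ℝ)).card)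
    (hm2 : m2 = (H.filter fun f =>
      f ≠ e ∧ (f ∩ e).Nonempty ∧ (r : ℝ) / (1 + α2) ≤ (f.card : ℝ) ∧
        (f.card : ℝ) < (1 + α1) * (r : ℝ)).card)
    (hrbig : (1 : ℝ) + α2 < (r : ℝ)) :
    ((1 + α1) * (m1 : ℝ) + (m2 : ℝ) / (1 + α2)
        ≤ (n : ℝ) + (1 + α2) * (n : ℝ) / ((r : ℝ) - 1 - α2)) ∧
      (((1 - τ) * (n : ℝ) ≤ (m1 : ℝ) + (m2 : ℝ) ∧ 0 < α1) →
        (m1 : ℝ) ≤ (τ + (1 + α2) * (1 + α2 * (r : ℝ)) / ((r : ℝ) - 1 - α2)) * (n : ℝ) / α1) := by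
  have hB : (0:ℝ) < 1 + α2 := by linarith
  have hD : (0:ℝ) < (r:ℝ) - 1 - α2 := by linarith
  have hR : (0:ℝ) < (r:ℝ) := by linarith
  have hN : (0:ℝ) ≤ (n:ℝ) := Nat.cast_nonneg n
  set S1 := H.filter (fun f =>
      f ≠ e ∧ (f ∩ e).Nonempty ∧ (1 + α1) * (r : ℝ) ≤ (f.card : ℝ)) with hS1def
  set S2 := H.filter (fun f =>
      f ≠ e ∧ (f ∩ e).Nonempty ∧ (r : ℝ) / (1 + α2) ≤ (f.card : ℝ) ∧
        (f.card : ℝ) < (1 + α1) * (r : ℝ)) with hS2def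
  set S := H.filter (fun f =>
      f ≠ e ∧ (f ∩ e).Nonempty ∧ (r : ℝ) / (1 + α2) ≤ (f.card : ℝ)) with hSdef
  -- every f in H has at least one vertex
  have hone : ∀ f ∈ H, 1 ≤ f.card := by
    intro f hf
    have := hsize f hf
    exact_mod_cast (by linarith : (1:ℝ) ≤ (f.card:ℝ))
  -- key counting bound over ℕ
  have keyN : ∑ f ∈ S, (f.card - 1) ≤ r * n := by
    calc ∑ f ∈ S, (f.card - 1)
        ≤ ∑ f ∈ S, (e ∩ f).card * (f.card - 1) := by
          refine sum_le_sum fun f hf => ?_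
          have hf' := mem_filter.mp hf
          have : 0 < (e ∩ f).card := by
            rw [card_pos, inter_comm]
            exact hf'.2.2.1
          exact Nat.le_mul_of_pos_left _ this
      _ = ∑ f ∈ S, ∑ v ∈ e ∩ f, (f.card - 1) := by
          refine sum_congr rfl fun f hf => ?_
          rw [sum_const, smul_eq_mul]
      _ = ∑ f ∈ S, ∑ v ∈ e, if v ∈ f then (f.card - 1) else 0 := by
          refine sum_congr rfl fun f hf => ?_
          rw [← sum_filter]
          congr 1
      _ = ∑ v ∈ e, ∑ f ∈ S, if v ∈ f then (f.card - 1) else 0 := sum_comm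
      _ = ∑ v ∈ e, ∑ f ∈ S.filter (fun f => v ∈ f), (f.card - 1) := by
          refine sum_congr rfl fun v hv => ?_
          exact (sum_filter (fun f => v ∈ f) _).symm
      _ ≤ ∑ v ∈ e, n := by
          refine sum_le_sum fun v hv => ?_
          refine vertex_sum_aux H hlin v _ ?_ ?_
          · intro f hf
            exact (mem_filter.mp ((filter_subset _ _) hf)).1
          · intro f hf
            exact (mem_filter.mp hf).2
      _ = r * n := by rw [sum_const, smul_eq_mul, hr]
  -- cast to ℝ
  have keyR : ∑ f ∈ S, ((f.card : ℝ) - 1) ≤ (r:ℝ) * (n:ℝ) := by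
    have : ∑ f ∈ S, ((f.card : ℝ) - 1) = ((∑ f ∈ S, (f.card - 1) : ℕ) : ℝ) := by
      rw [Nat.cast_sum]
      refine sum_congr rfl fun f hf => ?_
      have h1 : 1 ≤ f.card := hone f (mem_filter.mp hf).1
      rw [Nat.cast_sub h1, Nat.cast_one]
    rw [this]
    exact_mod_cast keyN
  -- S1, S2 are disjoint subsets of S
  have hS1S : S1 ⊆ S := by
    intro f hf
    have hf' := mem_filter.mp hf
    refine mem_filter.mpr ⟨hf'.1, hf'.2.1, hf'.2.2.1, ?_⟩
    have h1 : (r:ℝ) / (1 + α2) ≤ (r:ℝ) := by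
      rw [div_le_iff₀ hB]; nlinarith
    have h2 : (r:ℝ) ≤ (1 + α1) * (r:ℝ) := by nlinarith
    linarith [hf'.2.2.2]
  have hS2S : S2 ⊆ S := by
    intro f hf
    have hf' := mem_filter.mp hf
    exact mem_filter.mpr ⟨hf'.1, hf'.2.1, hf'.2.2.1, hf'.2.2.2.1⟩
  have hdisj12 : Disjoint S1 S2 := by
    rw [Finset.disjoint_left]
    intro f hf1 hf2
    have h1 := (mem_filter.mp hf1).2.2.2
    have h2 := (mem_filter.mp hf2).2.2.2.2
    linarith
  -- the main real inequality
  have hM1 : (0:ℝ) ≤ (m1:ℝ) := Nat.cast_nonneg m1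
  have hM2 : (0:ℝ) ≤ (m2:ℝ) := Nat.cast_nonneg m2
  have h1 : (m1:ℝ) * ((1 + α1) * (r:ℝ) - 1) + (m2:ℝ) * (((r:ℝ) - 1 - α2) / (1 + α2))
      ≤ (r:ℝ) * (n:ℝ) := by
    have hsplit : ∑ f ∈ S1, ((f.card : ℝ) - 1) + ∑ f ∈ S2, ((f.card : ℝ) - 1)
        ≤ ∑ f ∈ S, ((f.card : ℝ) - 1) := by
      rw [← sum_union hdisj12]
      refine sum_le_sum_of_subset_of_nonneg (union_subset hS1S hS2S) ?_
      intro f hf _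
      have := hsize f (mem_filter.mp hf).1
      linarith
    have hb1 : (m1:ℝ) * ((1 + α1) * (r:ℝ) - 1) ≤ ∑ f ∈ S1, ((f.card : ℝ) - 1) := by
      rw [hm1]
      calc (S1.card : ℝ) * ((1 + α1) * (r:ℝ) - 1)
          = ∑ _f ∈ S1, ((1 + α1) * (r:ℝ) - 1) := by rw [sum_const, nsmul_eq_mul]
        _ ≤ ∑ f ∈ S1, ((f.card : ℝ) - 1) := by
            refine sum_le_sum fun f hf => ?_
            have := (mem_filter.mp hf).2.2.2
            linarith
    have hb2 : (m2:ℝ) * (((r:ℝ) - 1 - α2) / (1 + α2)) ≤ ∑ f ∈ S2, ((f.card : ℝ) - 1) := by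
      rw [hm2]
      calc (S2.card : ℝ) * (((r:ℝ) - 1 - α2) / (1 + α2))
          = ∑ _f ∈ S2, (((r:ℝ) - 1 - α2) / (1 + α2)) := by rw [sum_const, nsmul_eq_mul]
        _ ≤ ∑ f ∈ S2, ((f.card : ℝ) - 1) := by
            refine sum_le_sum fun f hf => ?_
            have hge := (mem_filter.mp hf).2.2.2.1
            have : ((r:ℝ) - 1 - α2) / (1 + α2) = (r:ℝ) / (1 + α2) - 1 := by
              field_simp
              ring
            linarith
    linarith
  -- clear the denominator in h1
  have h1c : (m1:ℝ) * ((1 + α1) * (r:ℝ) - 1) * (1 + α2) + (m2:ℝ) * ((r:ℝ) - 1 - α2)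
      ≤ (r:ℝ) * (n:ℝ) * (1 + α2) := by
    have h := mul_le_mul_of_nonneg_right h1 hB.le
    have heq : ((m1:ℝ) * ((1 + α1) * (r:ℝ) - 1) + (m2:ℝ) * (((r:ℝ) - 1 - α2) / (1 + α2)))
        * (1 + α2)
        = (m1:ℝ) * ((1 + α1) * (r:ℝ) - 1) * (1 + α2) + (m2:ℝ) * ((r:ℝ) - 1 - α2) := by
      field_simp
    linarith [heq ▸ h]
  -- bound on m1 + m2
  have hsum_c : ((m1:ℝ) + (m2:ℝ)) * ((r:ℝ) - 1 - α2) ≤ (r:ℝ) * (n:ℝ) * (1 + α2) := by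
    nlinarith [mul_nonneg hM1 (mul_nonneg hα1 hR.le), mul_nonneg hM1 hα2,
      mul_nonneg (mul_nonneg hM1 hα2) hR.le, mul_nonneg (mul_nonneg hM1 hα1) (mul_nonneg hα2 hR.le)]
  -- cleared version of part (i)
  have goali_c : (1 + α1) * (m1:ℝ) * (1 + α2) * ((r:ℝ) - 1 - α2) + (m2:ℝ) * ((r:ℝ) - 1 - α2)
      ≤ (n:ℝ) * (1 + α2) * ((r:ℝ) - 1 - α2) + (1 + α2) * (1 + α2) * (n:ℝ) := by
    have hA := mul_le_mul_of_nonneg_right h1c hD.le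
    have hBb := mul_le_mul_of_nonneg_right hsum_c hB.le
    have hmul : (r:ℝ) * ((1 + α1) * (m1:ℝ) * (1 + α2) * ((r:ℝ) - 1 - α2)
          + (m2:ℝ) * ((r:ℝ) - 1 - α2))
        ≤ (r:ℝ) * ((n:ℝ) * (1 + α2) * ((r:ℝ) - 1 - α2) + (1 + α2) * (1 + α2) * (n:ℝ)) := by
      linarith [add_le_add hA hBb]
    exact le_of_mul_le_mul_left hmul hR
  constructor
  · -- part (i)
    rw [← sub_nonneg]
    have hrw : (n:ℝ) + (1 + α2) * (n:ℝ) / ((r:ℝ) - 1 - α2)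
        - ((1 + α1) * (m1:ℝ) + (m2:ℝ) / (1 + α2))
        = ((n:ℝ) * (1 + α2) * ((r:ℝ) - 1 - α2) + (1 + α2) * (1 + α2) * (n:ℝ)
          - ((1 + α1) * (m1:ℝ) * (1 + α2) * ((r:ℝ) - 1 - α2) + (m2:ℝ) * ((r:ℝ) - 1 - α2)))
          / ((1 + α2) * ((r:ℝ) - 1 - α2)) := by
      field_simp
    rw [hrw]
    apply div_nonneg (by linarith) (by positivity)
  · -- part (ii)
    rintro ⟨hcov, hα1pos⟩
    rw [le_div_iff₀ hα1pos, ← sub_nonneg]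
    have hrw : (τ + (1 + α2) * (1 + α2 * (r:ℝ)) / ((r:ℝ) - 1 - α2)) * (n:ℝ) - (m1:ℝ) * α1
        = (τ * (n:ℝ) * ((r:ℝ) - 1 - α2) + (1 + α2) * (1 + α2 * (r:ℝ)) * (n:ℝ)
          - (m1:ℝ) * α1 * ((r:ℝ) - 1 - α2)) / ((r:ℝ) - 1 - α2) := by
      field_simp
    rw [hrw]
    apply div_nonneg ?_ hD.le
    have hcovD := mul_le_mul_of_nonneg_right hcov hD.le
    linarith [goali_c, hcovD,
      mul_nonneg (mul_nonneg hM1 hD.le) (mul_nonneg hα1 hα2),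
      mul_nonneg (mul_nonneg hM1 hD.le) hα2,
      mul_nonneg (mul_nonneg hN hα2) (mul_nonneg hα2 hR.le)]
end

section
/- For all α1, α2 ∈ (0,1) there exists r ∈ ℕ such that there exists n0 ∈ ℕ with the following property for every n ≥ n0. Let ≺ be a linear ordering of the edges of an n-vertex linear hypergraph H in which every edge e satisfies |e| ≥ r. If C assigns to each edge e a set C(e) of colours with |C(e)| ≥ fwddeg(e) + α1·n, then there is an α2-bounded proper edge-colouring φ of H such that φ(e) ∈ C(e) for every edge e. -/
open Finset
open scoped Classical

/-- The set of vertices incident to an edge of `H` coloured `c` by `φ`. -/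
def vertsColoured {n : ℕ} (H : Finset (Finset (Fin n))) (φ : Finset (Fin n) → ℕ) (c : ℕ) :
    Finset (Fin n) :=
  Finset.univ.filter fun v => ∃ e ∈ H, φ e = c ∧ v ∈ e

/-- A proper edge-colouring is *α-bounded* if every colour is used at most once, or covers at
most `αn` vertices. -/
def AlphaBounded {n : ℕ} (H : Finset (Finset (Fin n))) (φ : Finset (Fin n) → ℕ)
    (α : ℝ) : Prop :=
  ∀ c : ℕ, (H.filter fun e => φ e = c).card ≤ 1 ∨
    ((vertsColoured H φ c).card : ℝ) ≤ α * n

/-! ### Auxiliary machinery for the greedy colouring -/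

noncomputable def gPick (S : Finset ℕ) : ℕ := if h : S.Nonempty then S.min' h else 0

lemma gPick_mem {S : Finset ℕ} (h : S.Nonempty) : gPick S ∈ S := by
  rw [gPick, dif_pos h]; exact S.min'_mem h

lemma vertsColoured_congr {n : ℕ} {P : Finset (Finset (Fin n))} {φ ψ : Finset (Fin n) → ℕ}
    (h : ∀ f ∈ P, φ f = ψ f) (c : ℕ) : vertsColoured P φ c = vertsColoured P ψ c := by
  unfold vertsColoured
  apply filter_congr
  intro v _
  constructor <;> rintro ⟨f, hf, hc, hv⟩
  · exact ⟨f, hf, by rw [← h f hf]; exact hc, hv⟩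
  · exact ⟨f, hf, by rw [h f hf]; exact hc, hv⟩

/-- The set of colours forbidden for edge `e`, given that the edges preceding `e`
(in the order `ord`) have been coloured according to `φ`. -/
noncomputable def gForb {n : ℕ} (α2 : ℝ) (H : Finset (Finset (Fin n)))
    (ord : Finset (Fin n) → ℕ) (φ : Finset (Fin n) → ℕ) (e : Finset (Fin n)) : Finset ℕ :=
  (((H.filter fun f => ord f < ord e).filter fun f =>
      (f ∩ e).Nonempty ∨ α2 * n / 2 < (f.card : ℝ)).image φ) ∪
  (((H.filter fun f => ord f < ord e).image φ).filter fun c =>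
    α2 * n < ((vertsColoured (H.filter fun f => ord f < ord e) φ c).card : ℝ) + (e.card : ℝ))

lemma gForb_congr {n : ℕ} (α2 : ℝ) (H : Finset (Finset (Fin n)))
    (ord : Finset (Fin n) → ℕ) {φ ψ : Finset (Fin n) → ℕ} (e : Finset (Fin n))
    (h : ∀ f ∈ H, ord f < ord e → φ f = ψ f) :
    gForb α2 H ord φ e = gForb α2 H ord ψ e := by
  have h' : ∀ f ∈ H.filter fun f => ord f < ord e, φ f = ψ f := by
    intro f hf; rw [mem_filter] at hf; exact h f hf.1 hf.2
  unfold gForb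
  congr 1
  · apply image_congr
    intro f hf
    exact h' f (mem_of_mem_filter f hf)
  · rw [image_congr h']
    apply filter_congr
    intro c _
    rw [vertsColoured_congr h']

/-- Greedy partial colouring: `gPhi … k` colours all edges `e ∈ H` with `ord e < k`. -/
noncomputable def gPhi {n : ℕ} (α2 : ℝ) (H : Finset (Finset (Fin n)))
    (ord : Finset (Fin n) → ℕ) (C : Finset (Fin n) → Finset ℕ) : ℕ → Finset (Fin n) → ℕ
  | 0 => fun _ => 0
  | (k+1) => fun e =>
      if ord e = k ∧ e ∈ H then
        gPick ((C e) \ gForb α2 H ord (gPhi α2 H ord C k) e)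
      else gPhi α2 H ord C k e

lemma gPhi_stab {n : ℕ} (α2 : ℝ) (H : Finset (Finset (Fin n)))
    (ord : Finset (Fin n) → ℕ) (C : Finset (Fin n) → Finset ℕ) :
    ∀ k, ∀ e ∈ H, ord e < k → gPhi α2 H ord C k e = gPhi α2 H ord C (ord e + 1) e := by
  intro k
  induction k with
  | zero => intro e _ h; omega
  | succ k ih =>
    intro e he h
    by_cases hk : ord e = k
    · rw [hk]
    · have h1 : gPhi α2 H ord C (k+1) e = gPhi α2 H ord C k e := by
        simp only [gPhi]; rw [if_neg]; tauto
      rw [h1]; exact ih e he (by omega)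

/-- The final greedy colouring. -/
noncomputable def gCol {n : ℕ} (α2 : ℝ) (H : Finset (Finset (Fin n)))
    (ord : Finset (Fin n) → ℕ) (C : Finset (Fin n) → Finset ℕ) (e : Finset (Fin n)) : ℕ :=
  gPhi α2 H ord C (ord e + 1) e

lemma gCol_eq {n : ℕ} (α2 : ℝ) (H : Finset (Finset (Fin n)))
    (ord : Finset (Fin n) → ℕ) (C : Finset (Fin n) → Finset ℕ) (e : Finset (Fin n)) (he : e ∈ H) :
    gCol α2 H ord C e = gPick ((C e) \ gForb α2 H ord (gCol α2 H ord C) e) := by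
  have h1 : gCol α2 H ord C e
      = gPick ((C e) \ gForb α2 H ord (gPhi α2 H ord C (ord e)) e) := by
    rw [gCol]; simp only [gPhi]; rw [if_pos ⟨trivial, he⟩]
  rw [h1]
  congr 1
  congr 1
  apply gForb_congr
  intro f hf hlt
  rw [gCol]; exact (gPhi_stab α2 H ord C (ord e) f hf hlt)

lemma linear_sum_card {n r : ℕ} {H : Finset (Finset (Fin n))} (hlin : LinearHG H)
    (hsize : ∀ e ∈ H, r ≤ e.card) (hr : 2 ≤ r) :
    (r - 1) * ∑ f ∈ H, f.card ≤ n * n := by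
  have hdisj : ∀ f ∈ H, ∀ g ∈ H, f ≠ g → Disjoint f.offDiag g.offDiag := by
    intro f hf g hg hfg
    rw [Finset.disjoint_left]
    intro p hp hq
    rw [Finset.mem_offDiag] at hp hq
    have hsub : ({p.1, p.2} : Finset (Fin n)) ⊆ f ∩ g := by
      intro x hx
      rw [mem_insert, mem_singleton] at hx
      rcases hx with h | h <;> subst h <;> exact mem_inter.mpr ⟨by tauto, by tauto⟩
    have h2 : ({p.1, p.2} : Finset (Fin n)).card = 2 := by
      rw [card_insert_of_notMem (by simp [hp.2.2]), card_singleton]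
    have := card_le_card hsub
    have := hlin f hf g hg hfg
    omega
  have h1 : ∑ f ∈ H, (r - 1) * f.card ≤ ∑ f ∈ H, f.offDiag.card := by
    apply Finset.sum_le_sum
    intro f hf
    rw [Finset.offDiag_card]
    have hc := hsize f hf
    calc (r - 1) * f.card ≤ (f.card - 1) * f.card := by
          apply Nat.mul_le_mul_right; omega
      _ ≤ f.card * f.card - f.card := le_of_eq (by rw [Nat.sub_mul, one_mul])
  have h2 : ∑ f ∈ H, f.offDiag.card = (H.biUnion Finset.offDiag).card :=
    (Finset.card_biUnion hdisj).symm
  have h3 : (H.biUnion Finset.offDiag).card ≤ n * n := by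
    calc (H.biUnion Finset.offDiag).card ≤ (Finset.univ : Finset (Fin n × Fin n)).card :=
          card_le_card (subset_univ _)
      _ = n * n := by rw [card_univ]; simp
  rw [Finset.mul_sum]
  omega

lemma verts_eq_biUnion {n : ℕ} (P : Finset (Finset (Fin n))) (φ : Finset (Fin n) → ℕ) (c : ℕ) :
    vertsColoured P φ c = (P.filter fun f => φ f = c).biUnion id := by
  ext v
  simp only [vertsColoured, mem_filter, mem_biUnion, mem_univ, true_and, id]
  constructor
  · rintro ⟨f, hf, hc, hv⟩; exact ⟨f, ⟨hf, hc⟩, hv⟩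
  · rintro ⟨f, ⟨hf, hc⟩, hv⟩; exact ⟨f, hf, hc, hv⟩

lemma cover_sum_le {n : ℕ} (P : Finset (Finset (Fin n))) (φ : Finset (Fin n) → ℕ) :
    ∑ c ∈ P.image φ, (vertsColoured P φ c).card ≤ ∑ f ∈ P, f.card := by
  have h1 : ∀ c, (vertsColoured P φ c).card ≤ ∑ f ∈ P.filter fun f => φ f = c, f.card := by
    intro c
    rw [verts_eq_biUnion]
    exact card_biUnion_le
  calc ∑ c ∈ P.image φ, (vertsColoured P φ c).card
      ≤ ∑ c ∈ P.image φ, ∑ f ∈ P.filter fun f => φ f = c, f.card :=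
        Finset.sum_le_sum fun c _ => h1 c
    _ = ∑ f ∈ P, f.card :=
        Finset.sum_fiberwise_of_maps_to (fun f hf => mem_image_of_mem φ hf) _

lemma greedy_arith {x Sn nr rr a1 a2 : ℝ} (hx : x * (a2 * nr / 2) ≤ 2 * Sn)
    (hsum : (rr - 1) * Sn ≤ nr * nr) (hr : 4 < a1 * a2 * (rr - 1)) (hr2 : 2 ≤ rr)
    (hn1 : 1 ≤ nr) (ha1 : 0 < a1) (ha2 : 0 < a2) : x < a1 * nr := by
  have hr1 : (0:ℝ) < rr - 1 := by linarith
  have hn0 : (0:ℝ) < nr := by linarith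
  have hp : (0:ℝ) < (a2 * nr / 2) * (rr - 1) := by positivity
  have h5 : x * ((a2 * nr / 2) * (rr - 1)) ≤ 2 * (nr * nr) := by
    calc x * ((a2 * nr / 2) * (rr - 1)) = (x * (a2 * nr / 2)) * (rr - 1) := by ring
      _ ≤ (2 * Sn) * (rr - 1) := mul_le_mul_of_nonneg_right hx (le_of_lt hr1)
      _ = 2 * ((rr - 1) * Sn) := by ring
      _ ≤ 2 * (nr * nr) := by linarith
  have h6 : 2 * (nr * nr) < a1 * nr * ((a2 * nr / 2) * (rr - 1)) := by
    have hnn : (0:ℝ) < nr * nr := mul_pos hn0 hn0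
    have heq : a1 * nr * ((a2 * nr / 2) * (rr - 1)) = (a1 * a2 * (rr - 1) / 2) * (nr * nr) := by
      ring
    rw [heq]
    exact mul_lt_mul_of_pos_right (by linarith) hnn
  exact lt_of_mul_lt_mul_right (lt_of_le_of_lt h5 h6) (le_of_lt hp)

/-- Greedy colouring with lists: if every edge `e` of an `n`-vertex linear hypergraph with all
edges of size at least `r` has a colour list of size at least `fwddeg(e) + α1·n`, then there is
an `α2`-bounded proper edge-colouring from these lists. -/
theorem greedy_list_colouring :
    ∀ α1 α2 : ℝ, 0 < α1 → α1 < 1 → 0 < α2 → α2 < 1 →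
      ∃ r : ℕ, ∃ n0 : ℕ, ∀ n : ℕ, n0 ≤ n →
        ∀ H : Finset (Finset (Fin n)), LinearHG H → (∀ e ∈ H, r ≤ e.card) →
          ∀ pos : Finset (Fin n) → ℕ, OrderOn H pos →
            ∀ C : Finset (Fin n) → Finset ℕ,
              (∀ e ∈ H, (fwdDeg H pos e : ℝ) + α1 * n ≤ ((C e).card : ℝ)) →
              ∃ φ : Finset (Fin n) → ℕ,
                (∀ e ∈ H, φ e ∈ C e) ∧ IsProperEC H φ ∧ AlphaBounded H φ α2 := by
  intro α1 α2 hα1 hα1' hα2 hα2'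
  refine ⟨⌈(4:ℝ)/(α1*α2)⌉₊ + 2, 1, ?_⟩
  set r : ℕ := ⌈(4:ℝ)/(α1*α2)⌉₊ + 2 with hr_def
  intro n hn H hlin hsize pos hord C hC
  have hn1 : (1:ℝ) ≤ n := by exact_mod_cast hn
  have hr2 : 2 ≤ r := by omega
  -- the big-edges-first order
  set M : ℕ := H.sup pos + 1 with hM_def
  have hposM : ∀ e ∈ H, pos e < M := by
    intro e he
    have := Finset.le_sup (f := pos) he
    omega
  set big : Finset (Fin n) → Prop := fun f => α2 * n / 2 < (f.card : ℝ) with hbig_def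
  set ord : Finset (Fin n) → ℕ := fun e => if big e then pos e else pos e + M with hord_def
  have hord_big : ∀ e, big e → ord e = pos e := by
    intro e h; simp only [hord_def, if_pos h]
  have hord_small : ∀ e, ¬ big e → ord e = pos e + M := by
    intro e h; simp only [hord_def, if_neg h]
  have hordinj : ∀ e ∈ H, ∀ f ∈ H, ord e = ord f → e = f := by
    intro e he f hf hef
    by_cases h1 : big e <;> by_cases h2 : big f
    · rw [hord_big e h1, hord_big f h2] at hef; exact hord e he f hf hef
    · rw [hord_big e h1, hord_small f h2] at hef
      have := hposM e he; omega
    · rw [hord_small e h1, hord_big f h2] at hef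
      have := hposM f hf; omega
    · rw [hord_small e h1, hord_small f h2] at hef
      exact hord e he f hf (by omega)
  set φ : Finset (Fin n) → ℕ := gCol α2 H ord C with hφ_def
  -- global counting quantities
  set Sn : ℕ := ∑ f ∈ H, f.card with hSn_def
  have hsum : ((r:ℝ) - 1) * Sn ≤ (n:ℝ) * n := by
    have h := linear_sum_card hlin hsize hr2
    have : (((r-1) * Sn : ℕ) : ℝ) ≤ ((n*n : ℕ) : ℝ) := by exact_mod_cast h
    push_cast [Nat.cast_sub (by omega : 1 ≤ r)] at this
    push_cast
    linarith
  set bigSet : Finset (Finset (Fin n)) := H.filter fun f => big f with hbigSet_def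
  have hBigCard : (bigSet.card : ℝ) * (α2 * n / 2) ≤ (Sn : ℝ) := by
    have h1 : ∀ f ∈ bigSet, α2 * n / 2 ≤ (f.card : ℝ) := by
      intro f hf
      exact le_of_lt (mem_filter.mp hf).2
    have h2 := Finset.card_nsmul_le_sum bigSet (fun f => (f.card : ℝ)) (α2 * n / 2) h1
    rw [nsmul_eq_mul] at h2
    have h3 : ∑ f ∈ bigSet, (f.card : ℝ) ≤ (Sn : ℝ) := by
      rw [hSn_def]
      push_cast
      exact Finset.sum_le_sum_of_subset_of_nonneg (filter_subset _ _)
        (fun _ _ _ => Nat.cast_nonneg _)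
    linarith
  have hrlarge : 4 < α1 * α2 * ((r:ℝ) - 1) := by
    have h1 : (4:ℝ)/(α1*α2) ≤ (⌈(4:ℝ)/(α1*α2)⌉₊ : ℝ) := Nat.le_ceil _
    have h2 : ((r:ℝ) - 1) = (⌈(4:ℝ)/(α1*α2)⌉₊ : ℝ) + 1 := by
      rw [hr_def]; push_cast; ring
    have hpos : 0 < α1 * α2 := by positivity
    rw [h2]
    have h3 : (4:ℝ) = (4/(α1*α2)) * (α1*α2) := by field_simp
    calc (4:ℝ) = (4/(α1*α2)) * (α1*α2) := h3
      _ ≤ (⌈(4:ℝ)/(α1*α2)⌉₊ : ℝ) * (α1*α2) := by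
          apply mul_le_mul_of_nonneg_right h1 (le_of_lt hpos)
      _ < ((⌈(4:ℝ)/(α1*α2)⌉₊ : ℝ) + 1) * (α1*α2) := by
          apply mul_lt_mul_of_pos_right _ hpos
          linarith
      _ = α1 * α2 * ((⌈(4:ℝ)/(α1*α2)⌉₊ : ℝ) + 1) := by ring
  -- the key cardinality estimate for the forbidden set
  have hforb : ∀ e ∈ H, ((gForb α2 H ord φ e).card : ℝ) < ((C e).card : ℝ) := by
    intro e he
    set prev : Finset (Finset (Fin n)) := H.filter fun f => ord f < ord e with hprev_def
    set A : Finset ℕ :=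
      (prev.filter fun f => (f ∩ e).Nonempty ∨ α2 * n / 2 < (f.card : ℝ)).image φ with hA_def
    set Hv : Finset ℕ := (prev.image φ).filter fun c =>
      α2 * n < ((vertsColoured prev φ c).card : ℝ) + (e.card : ℝ) with hHv_def
    have hforb_eq : gForb α2 H ord φ e = A ∪ Hv := rfl
    have hprevsum : (∑ f ∈ prev, (f.card : ℝ)) ≤ (Sn : ℝ) := by
      rw [hSn_def]; push_cast
      exact Finset.sum_le_sum_of_subset_of_nonneg (filter_subset _ _)
        (fun _ _ _ => Nat.cast_nonneg _)
    -- bound on A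
    have hAcard : A.card ≤ fwdDeg H pos e + bigSet.card := by
      have hsub : (prev.filter fun f => (f ∩ e).Nonempty ∨ α2 * n / 2 < (f.card : ℝ)) ⊆
          (H.filter fun f => pos f < pos e ∧ (f ∩ e).Nonempty) ∪ bigSet := by
        intro f hf
        rw [mem_filter] at hf
        obtain ⟨hfp, hP⟩ := hf
        rw [hprev_def, mem_filter] at hfp
        obtain ⟨hfH, hflt⟩ := hfp
        rcases hP with hint | hbigf
        · by_cases hbf : big f
          · exact mem_union_right _ (mem_filter.mpr ⟨hfH, hbf⟩)
          · rw [hord_small f hbf] at hflt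
            have he_ord : ord e ≤ pos e + M := by
              by_cases hbe : big e
              · rw [hord_big e hbe]; omega
              · rw [hord_small e hbe]
            apply mem_union_left
            exact mem_filter.mpr ⟨hfH, by omega, hint⟩
        · exact mem_union_right _ (mem_filter.mpr ⟨hfH, hbigf⟩)
      calc A.card ≤ (prev.filter fun f => (f ∩ e).Nonempty ∨ α2 * n / 2 < (f.card : ℝ)).card :=
            card_image_le
        _ ≤ ((H.filter fun f => pos f < pos e ∧ (f ∩ e).Nonempty) ∪ bigSet).card :=
            card_le_card hsub
        _ ≤ fwdDeg H pos e + bigSet.card := by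
            rw [fwdDeg]; exact card_union_le _ _
    -- bound on Hv
    have hHvCard : (Hv.card : ℝ) * (α2 * n / 2) ≤ (Sn : ℝ) := by
      by_cases hbe : big e
      · -- all previous edges are big
        have hprevbig : prev ⊆ bigSet := by
          intro f hf
          rw [hprev_def, mem_filter] at hf
          obtain ⟨hfH, hflt⟩ := hf
          by_cases hbf : big f
          · exact mem_filter.mpr ⟨hfH, hbf⟩
          · exfalso
            rw [hord_small f hbf, hord_big e hbe] at hflt
            have := hposM e he
            omega
        have h1 : Hv.card ≤ bigSet.card := by
          calc Hv.card ≤ (prev.image φ).card := card_le_card (filter_subset _ _)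
            _ ≤ prev.card := card_image_le
            _ ≤ bigSet.card := card_le_card hprevbig
        calc (Hv.card : ℝ) * (α2 * n / 2) ≤ (bigSet.card : ℝ) * (α2 * n / 2) := by
              apply mul_le_mul_of_nonneg_right (by exact_mod_cast h1) (by positivity)
          _ ≤ (Sn : ℝ) := hBigCard
      · -- e is small: every heavy colour covers at least α2·n/2 vertices
        have hsmall : (e.card : ℝ) ≤ α2 * n / 2 := not_lt.mp hbe
        have h1 : ∀ c ∈ Hv, α2 * n / 2 ≤ ((vertsColoured prev φ c).card : ℝ) := by
          intro c hc
          rw [hHv_def, mem_filter] at hc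
          linarith [hc.2]
        have h2 := Finset.card_nsmul_le_sum Hv
          (fun c => ((vertsColoured prev φ c).card : ℝ)) (α2 * n / 2) h1
        rw [nsmul_eq_mul] at h2
        have h3 : (∑ c ∈ Hv, ((vertsColoured prev φ c).card : ℝ)) ≤
            ∑ c ∈ prev.image φ, ((vertsColoured prev φ c).card : ℝ) := by
          apply Finset.sum_le_sum_of_subset_of_nonneg (filter_subset _ _)
          intro _ _ _; exact Nat.cast_nonneg _
        have h4 : (∑ c ∈ prev.image φ, ((vertsColoured prev φ c).card : ℝ)) ≤
            ∑ f ∈ prev, (f.card : ℝ) := by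
          have := cover_sum_le prev φ
          exact_mod_cast this
        linarith
    -- combine
    have hBH : (bigSet.card : ℝ) + (Hv.card : ℝ) < α1 * n := by
      have hx : ((bigSet.card : ℝ) + (Hv.card : ℝ)) * (α2 * n / 2) ≤ 2 * (Sn : ℝ) := by
        rw [add_mul]; linarith
      exact greedy_arith hx hsum hrlarge (by exact_mod_cast hr2) hn1 hα1 hα2
    have hCe := hC e he
    have hcard : (gForb α2 H ord φ e).card ≤ A.card + Hv.card := by
      rw [hforb_eq]; exact card_union_le _ _
    have : ((gForb α2 H ord φ e).card : ℝ) ≤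
        (fwdDeg H pos e : ℝ) + (bigSet.card : ℝ) + (Hv.card : ℝ) := by
      have h7 : ((gForb α2 H ord φ e).card : ℝ) ≤ (A.card : ℝ) + (Hv.card : ℝ) := by
        exact_mod_cast hcard
      have h8 : (A.card : ℝ) ≤ (fwdDeg H pos e : ℝ) + (bigSet.card : ℝ) := by
        exact_mod_cast hAcard
      linarith
    linarith
  -- nonemptiness of the choice set, and the basic membership facts
  have hNE : ∀ e ∈ H, ((C e) \ gForb α2 H ord φ e).Nonempty := by
    intro e he
    rw [Finset.nonempty_iff_ne_empty]
    intro hempty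
    have hsub : C e ⊆ gForb α2 H ord φ e := by
      rw [← Finset.sdiff_eq_empty_iff_subset]; exact hempty
    have := card_le_card hsub
    have := hforb e he
    have : ((C e).card : ℝ) ≤ ((gForb α2 H ord φ e).card : ℝ) := by exact_mod_cast ‹(C e).card ≤ _›
    linarith
  have hmem : ∀ e ∈ H, φ e ∈ (C e) \ gForb α2 H ord φ e := by
    intro e he
    have := gCol_eq α2 H ord C e he
    rw [hφ_def, this]
    exact gPick_mem (hNE e he)
  refine ⟨φ, ?_, ?_, ?_⟩
  · intro e he
    exact (mem_sdiff.mp (hmem e he)).1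
  · -- properness
    have key : ∀ a ∈ H, ∀ b ∈ H, ord b < ord a → (b ∩ a).Nonempty → φ a ≠ φ b := by
      intro a ha b hb hlt hint
      have hnot : φ a ∉ gForb α2 H ord φ a := (mem_sdiff.mp (hmem a ha)).2
      intro heq
      apply hnot
      apply mem_union_left
      rw [heq]
      apply mem_image_of_mem
      rw [mem_filter]
      exact ⟨mem_filter.mpr ⟨hb, hlt⟩, Or.inl hint⟩
    intro e he f hf hne hint
    rcases lt_trichotomy (ord e) (ord f) with h | h | h
    · exact (key f hf e he h hint).symm
    · exact absurd (hordinj e he f hf h) hne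
    · exact key e he f hf h (by rwa [inter_comm] at hint)
  · -- α2-boundedness
    intro c
    by_cases hcard : (H.filter fun e => φ e = c).card ≤ 1
    · exact Or.inl hcard
    right
    set S : Finset (Finset (Fin n)) := H.filter fun e => φ e = c with hS_def
    have h2 : 1 < S.card := by omega
    obtain ⟨e, heS, hemax⟩ := Finset.exists_max_image S ord (Finset.card_pos.mp (by omega))
    have heH : e ∈ H := (mem_filter.mp heS).1
    have heC : φ e = c := (mem_filter.mp heS).2
    set prev : Finset (Finset (Fin n)) := H.filter fun f => ord f < ord e with hprev_def
    have hprevS : ∀ f ∈ S, f ≠ e → f ∈ prev := by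
      intro f hfS hfe
      have hfH : f ∈ H := (mem_filter.mp hfS).1
      have hle := hemax f hfS
      have hne : ord f ≠ ord e := fun h => hfe (hordinj f hfH e heH h)
      exact mem_filter.mpr ⟨hfH, lt_of_le_of_ne hle hne⟩
    -- there is another edge of colour c
    obtain ⟨f₀, hf₀S, hf₀e⟩ : ∃ f₀ ∈ S, f₀ ≠ e := by
      obtain ⟨a, ha, b, hb, hab⟩ := Finset.one_lt_card.mp h2
      by_cases hae : a = e
      · exact ⟨b, hb, by rw [← hae]; exact fun h => hab h.symm⟩
      · exact ⟨a, ha, hae⟩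
    have hf₀prev : f₀ ∈ prev := hprevS f₀ hf₀S hf₀e
    have hf₀c : φ f₀ = c := (mem_filter.mp hf₀S).2
    have hcimg : c ∈ prev.image φ := by
      rw [← hf₀c]; exact mem_image_of_mem φ hf₀prev
    -- c is not a heavy colour for e
    have hnotforb : φ e ∉ gForb α2 H ord φ e := (mem_sdiff.mp (hmem e heH)).2
    have hnotheavy : ¬ (α2 * n < ((vertsColoured prev φ c).card : ℝ) + (e.card : ℝ)) := by
      intro hheavy
      apply hnotforb
      apply mem_union_right
      rw [heC]
      exact mem_filter.mpr ⟨hcimg, hheavy⟩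
    have hcover : ((vertsColoured prev φ c).card : ℝ) + (e.card : ℝ) ≤ α2 * n :=
      not_lt.mp hnotheavy
    have hsub : vertsColoured H φ c ⊆ vertsColoured prev φ c ∪ e := by
      intro v hv
      rw [vertsColoured, mem_filter] at hv
      obtain ⟨_, f, hfH, hfc, hvf⟩ := hv
      by_cases hfe : f = e
      · exact mem_union_right _ (hfe ▸ hvf)
      · apply mem_union_left
        rw [vertsColoured, mem_filter]
        exact ⟨mem_univ v, f, hprevS f (mem_filter.mpr ⟨hfH, hfc⟩) hfe, hfc, hvf⟩
    calc ((vertsColoured H φ c).card : ℝ)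
        ≤ ((vertsColoured prev φ c ∪ e).card : ℝ) := by
          exact_mod_cast card_le_card hsub
      _ ≤ ((vertsColoured prev φ c).card : ℝ) + (e.card : ℝ) := by
          exact_mod_cast card_union_le _ _
      _ ≤ α2 * n := hcover
end

section
/- For every ρ ∈ (0,1] there exists ξ0 > 0 such that for every ξ ∈ (0, ξ0] the following holds. If H is a bipartite graph with bipartition (A, B) that is upper (ρ, ξ)-regular, such that the number of vertices of H is at most ρ|A|/ξ and every vertex v ∈ A satisfies d_H(v) ≥ 2ρ|A|, then H has a matching covering A. -/
open Finset

/-- The number of edges of a graph `G` between two (disjoint) vertex sets `S` and `T`. -/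
def edgesBetween {V : Type*} [DecidableEq V] (G : SimpleGraph V) [DecidableRel G.Adj]
    (S T : Finset V) : ℕ :=
  ((S ×ˢ T).filter fun p => G.Adj p.1 p.2).card

/-- A graph `G` on `N` vertices is *upper `(ρ, ξ)`-regular* if for all disjoint vertex sets
`S, T` of size at least `ξN`, the number of edges between `S` and `T` is at most
`(ρ + ξ)|S||T|`. -/
def UpperRegular {N : ℕ} (G : SimpleGraph (Fin N)) [DecidableRel G.Adj] (ρ ξ : ℝ) : Prop :=
  ∀ S T : Finset (Fin N), Disjoint S T →
    ξ * N ≤ (S.card : ℝ) → ξ * N ≤ (T.card : ℝ) →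
    (edgesBetween G S T : ℝ) ≤ (ρ + ξ) * S.card * T.card


/-!
Take `ξ0 = ρ` and verify Hall's condition. If `S ⊆ A` had fewer than `|S|` neighbours, then
`T = N(S)` would still contain the neighbourhood of a single vertex, so
`|S| > |T| ≥ 2ρ|A| ≥ ξN`, and upper regularity applies to the pair `(S, T)`. Every edge at `S`
ends in `T`, so `2ρ|A||S| ≤ e(S, T) ≤ (ρ + ξ)|S||T| < 2ρ|S||A|`, a contradiction.
-/

open SimpleGraph

theorem edgesBetween_eq_sum_degree {V : Type*} [Fintype V] [DecidableEq V] (G : SimpleGraph V)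
    [DecidableRel G.Adj] {S T : Finset V} (hST : ∀ v ∈ S, G.neighborFinset v ⊆ T) :
    edgesBetween G S T = ∑ v ∈ S, G.degree v := by
  rw [edgesBetween, card_filter, sum_product]
  refine sum_congr rfl fun v hv => ?_
  rw [← card_filter, ← card_neighborFinset_eq_degree]
  congr 1
  ext w
  simpa using fun h => hST v hv ((G.mem_neighborFinset v w).mpr h)

theorem ncard_iUnion_neighborSet {V : Type*} [Fintype V] [DecidableEq V] (G : SimpleGraph V)
    [DecidableRel G.Adj] (S : Finset V) :
    (⋃ v ∈ (S : Set V), G.neighborSet v).ncard = #(S.biUnion fun v => G.neighborFinset v) := by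
  rw [← Set.ncard_coe_finset, coe_biUnion]
  simp only [coe_neighborFinset]

theorem card_le_card_biUnion_neighborFinset_of_upperRegular {N : ℕ} {G : SimpleGraph (Fin N)}
    [DecidableRel G.Adj] {ρ ξ : ℝ} (hreg : UpperRegular G ρ ξ) {A B : Finset (Fin N)}
    (hbip : G.IsBipartiteWith A B) (hξ : 0 < ξ) (hξρ : ξ ≤ ρ) (hN : ξ * N ≤ ρ * #A)
    (hdeg : ∀ v ∈ A, 2 * ρ * #A ≤ (G.degree v : ℝ)) {S : Finset (Fin N)} (hSA : S ⊆ A) :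
    #S ≤ #(S.biUnion fun v => G.neighborFinset v) := by
  set T := S.biUnion fun v => G.neighborFinset v
  have hNT : ∀ v ∈ S, G.neighborFinset v ⊆ T :=
    fun v hv => subset_biUnion_of_mem (fun v => G.neighborFinset v) hv
  by_contra! hTS
  obtain ⟨a, ha⟩ : S.Nonempty := card_pos.mp (by omega)
  have hρ : 0 < ρ := hξ.trans_le hξρ
  have hST : Disjoint S T := by
    refine disjoint_of_subset_left hSA (disjoint_of_subset_right ?_ (disjoint_coe.mp hbip.disjoint))
    exact biUnion_subset.mpr fun v hv => isBipartiteWith_neighborFinset_subset hbip (hSA hv)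
  have hTS' : (#T : ℝ) < #S := by exact_mod_cast hTS
  have hSA' : (#S : ℝ) ≤ #A := by exact_mod_cast card_le_card hSA
  have hS_pos : (0 : ℝ) < #S := by linarith [(#T).cast_nonneg (α := ℝ)]
  have hT : ξ * N ≤ #T := calc
    ξ * N ≤ ρ * #A := hN
    _ ≤ 2 * ρ * #A := by nlinarith
    _ ≤ G.degree a := hdeg a (hSA ha)
    _ ≤ #T := by
      rw [← card_neighborFinset_eq_degree]
      exact_mod_cast card_le_card (hNT a ha)
  have hedges : 2 * ρ * #A * #S ≤ (edgesBetween G S T : ℝ) := by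
    rw [edgesBetween_eq_sum_degree G hNT, mul_comm]
    push_cast
    simpa using card_nsmul_le_sum S _ _ fun v hv => hdeg v (hSA hv)
  have := calc
    2 * ρ * #A * #S ≤ (edgesBetween G S T : ℝ) := hedges
    _ ≤ (ρ + ξ) * #S * #T := hreg S T hST (hT.trans hTS'.le) hT
    _ < (ρ + ξ) * #S * #S := by gcongr
    _ ≤ 2 * ρ * #S * #S := by gcongr; linarith
    _ ≤ 2 * ρ * #S * #A := mul_le_mul_of_nonneg_left hSA' (by positivity)
    _ = 2 * ρ * #A * #S := by ring
  exact this.false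

/-- An upper `(ρ, ξ)`-regular bipartite graph with bipartition `(A, B)`, at most `ρ|A|/ξ`
vertices, and every vertex of `A` of degree at least `2ρ|A|`, has a matching covering `A`. -/
theorem bipartite_regular_matching :
    ∀ ρ : ℝ, 0 < ρ → ρ ≤ 1 →
      ∃ ξ0 : ℝ, 0 < ξ0 ∧ ∀ ξ : ℝ, 0 < ξ → ξ ≤ ξ0 →
        ∀ (N : ℕ) (G : SimpleGraph (Fin N)) [DecidableRel G.Adj]
          (A B : Finset (Fin N)),
          Disjoint A B → A ∪ B = Finset.univ →
          (∀ u v, G.Adj u v → (u ∈ A ∧ v ∈ B) ∨ (u ∈ B ∧ v ∈ A)) →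
          UpperRegular G ρ ξ →
          (N : ℝ) ≤ ρ * A.card / ξ →
          (∀ v ∈ A, 2 * ρ * A.card ≤ (G.degree v : ℝ)) →
          ∃ M : SimpleGraph.Subgraph G, M.IsMatching ∧ ∀ a ∈ A, a ∈ M.verts := by
  intro ρ hρ _
  refine ⟨ρ, hρ, fun ξ hξ hξρ N G _ A B hAB _ hbip hreg hN hdeg => ?_⟩
  have hbip : G.IsBipartiteWith A B := ⟨disjoint_coe.mpr hAB, fun u v => hbip u v⟩
  have hN : ξ * N ≤ ρ * #A := by rwa [le_div_iff₀' hξ] at hN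
  obtain ⟨M, hAM, hM⟩ := exists_isMatching_of_forall_ncard_le hbip fun s hs => by
    lift s to Finset (Fin N) using s.toFinite
    rw [ncard_iUnion_neighborSet, Set.ncard_coe_finset]
    exact card_le_card_biUnion_neighborFinset_of_upperRegular hreg hbip hξ hξρ hN hdeg
      (coe_subset.mp hs)
  exact ⟨M, hM, fun a ha => hAM ha⟩
end

section
/- Let δ ∈ (0,1), let H be an n-vertex graph, let C be a set of colours with |C| ≥ 7δn, and for every vertex w of H let C_w ⊆ C, such that: (i) for every vertex w, d_H(w) ≤ |C| − |C_w|; (ii) there is a set U ⊆ V(H) with |U| ≤ δn such that every edge of H is incident to a vertex of U; (iii) for every vertex w, |C_w| ≤ δn; and (iv) for every c ∈ C, the number of vertices w with c ∈ C_w is at most δn. Then there exists a proper edge-colouring φ : E(H) → C such that every edge uv of H satisfies φ(uv) ∉ C_u ∪ C_v. -/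
/-!
Colour the edges at the vertices of the dominating set `U` one vertex at a time, keeping a
proper list colouring of all edges that meet the set `D` of vertices processed so far. When `u`
is added, the edges `uv` with `v ∉ D` are coloured simultaneously by Hall's theorem. Each such
`v` has at least `|C| - 4δn ≥ 3δn` free colours (avoiding the lists of `u` and `v` and the
colours already at `u` and `v`). A colour free at `u` is unavailable to at most `2δn` of the
vertices `v`: to `δn` by (iv), and to at most `|D| ≤ δn` because a colour class is a matching.
So a set of more than `3δn` vertices `v` sees every colour free at `u`, and by (i) there are at
least `deg u - |N(u) ∩ D|` of those, which is the number of edges to colour.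
-/

open Finset

theorem Finset.exists_injective_mem_of_card_filter_notMem_le {ι κ : Type*} [DecidableEq κ]
    {T : Finset ι} {A : ι → Finset κ} {B : Finset κ} (hTB : #T ≤ #B)
    (hA : ∀ c ∈ B, ∀ v ∈ T, #{w ∈ T | c ∉ A w} ≤ #(A v)) :
    ∃ f : T → κ, Function.Injective f ∧ ∀ v : T, f v ∈ A v := by
  refine (all_card_le_biUnion_card_iff_exists_injective fun v : T => A v).1 fun S => ?_
  obtain rfl | ⟨v₀, hv₀⟩ := S.eq_empty_or_nonempty
  · simp
  by_cases hS : #S ≤ #(A v₀)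
  · exact hS.trans (card_le_card (subset_biUnion_of_mem (fun v : T => A v) hv₀))
  -- `S` is too large to lie inside `{w ∈ T | c ∉ A w}` for any `c ∈ B`.
  have hB : B ⊆ S.biUnion fun v => A v := by
    intro c hc
    by_contra hcS
    refine hS ((card_le_card_of_injOn Subtype.val (fun v hv => ?_)
      Subtype.val_injective.injOn).trans (hA c hc v₀ v₀.2))
    simp only [coe_filter, Set.mem_ofPred_eq]
    exact ⟨v.2, fun h => hcS (mem_biUnion.2 ⟨v, hv, h⟩)⟩
  calc #S ≤ #T := by simpa using card_le_univ S
    _ ≤ #B := hTB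
    _ ≤ _ := card_le_card hB

variable {V κ : Type*}

structure IsListColouringOn [DecidableEq κ] (C : Finset κ) (L : V → Finset κ)
    (F : Set (Sym2 V)) (φ : Sym2 V → κ) : Prop where
  mem_sdiff : ∀ e ∈ F, ∀ x ∈ e, φ e ∈ C \ L x
  proper : ∀ e ∈ F, ∀ e' ∈ F, e ≠ e' → ∀ x ∈ e, x ∈ e' → φ e ≠ φ e'

open Classical in
noncomputable def updateStar (φ : Sym2 V → κ) (u : V) (T : Finset V) (f : T → κ) :
    Sym2 V → κ :=
  fun e => if h : ∃ v : T, e = s(u, v) then f h.choose else φ e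

section updateStar

variable {φ : Sym2 V → κ} {u : V} {T : Finset V} {f : T → κ}

theorem updateStar_mk (v : T) : updateStar φ u T f s(u, v) = f v := by
  have h : ∃ w : T, s(u, ↑v) = s(u, ↑w) := ⟨v, rfl⟩
  rw [updateStar, dif_pos h]
  exact congrArg f (Subtype.ext (Sym2.congr_right.1 h.choose_spec).symm)

theorem updateStar_of_notMem {e : Sym2 V} (he : e ∉ Set.range fun v : T => s(u, ↑v)) :
    updateStar φ u T f e = φ e :=
  dif_neg fun ⟨v, hv⟩ => he ⟨v, hv.symm⟩

end updateStar

namespace IsListColouringOn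

variable [DecidableEq κ] {C : Finset κ} {L : V → Finset κ} {F F' : Set (Sym2 V)}
  {φ : Sym2 V → κ}

theorem mono (hφ : IsListColouringOn C L F φ) (h : F' ⊆ F) : IsListColouringOn C L F' φ :=
  ⟨fun e he => hφ.mem_sdiff e (h he), fun e he e' he' => hφ.proper e (h he) e' (h he')⟩

theorem empty : IsListColouringOn C L ∅ φ :=
  ⟨fun _ => False.elim, fun _ => False.elim⟩

theorem updateStar (hφ : IsListColouringOn C L F φ) {u : V} {T : Finset V} {f : T → κ}
    (hT : ∀ v : T, s(u, ↑v) ∉ F) (hf : Function.Injective f)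
    (hf_mem : ∀ v : T, f v ∈ C \ (L u ∪ L v))
    (hf_fresh : ∀ v : T, ∀ e ∈ F, (u ∈ e ∨ ↑v ∈ e) → f v ≠ φ e) :
    IsListColouringOn C L (F ∪ Set.range fun v : T => s(u, ↑v)) (updateStar φ u T f) := by
  have old : ∀ e ∈ F, _root_.updateStar φ u T f e = φ e := fun e he =>
    updateStar_of_notMem fun ⟨v, hv⟩ => hT v (by subst hv; exact he)
  have fresh : ∀ v : T, ∀ e ∈ F, ∀ x ∈ s(u, ↑v), x ∈ e → f v ≠ φ e := by
    intro v e he x hx hxe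
    exact hf_fresh v e he (by rcases Sym2.mem_iff.1 hx with rfl | rfl <;> simp [hxe])
  constructor
  · rintro e (he | ⟨v, rfl⟩) x hx
    · rw [old e he]
      exact hφ.mem_sdiff e he x hx
    · rw [updateStar_mk]
      have := hf_mem v
      rcases Sym2.mem_iff.1 hx with rfl | rfl <;> grind
  · rintro e (he | ⟨v, rfl⟩) e' (he' | ⟨v', rfl⟩) hne x hx hx'
    · rw [old e he, old e' he']
      exact hφ.proper e he e' he' hne x hx hx'
    · rw [old e he, updateStar_mk]
      exact (fresh v' e he x hx' hx).symm
    · rw [updateStar_mk, old e' he']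
      exact fresh v e' he' x hx hx'
    · rw [updateStar_mk, updateStar_mk]
      exact hf.ne fun h => hne (h ▸ rfl)

end IsListColouringOn

namespace SimpleGraph

variable (H : SimpleGraph V)

def edgesMeeting (D : Finset V) : Set (Sym2 V) := {e ∈ H.edgeSet | ∃ x ∈ D, x ∈ e}

theorem edgesMeeting_empty : H.edgesMeeting ∅ = ∅ := by
  simp [edgesMeeting]

theorem edgeSet_subset_edgesMeeting {D : Finset V} (hD : ∀ u v, H.Adj u v → u ∈ D ∨ v ∈ D) :
    H.edgeSet ⊆ H.edgesMeeting D := by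
  intro e he
  induction e using Sym2.ind with
  | _ u v =>
    exact ⟨he, (hD u v he).elim (⟨u, ·, Sym2.mem_mk_left u v⟩) (⟨v, ·, Sym2.mem_mk_right u v⟩)⟩

variable [Fintype V] [DecidableEq V] [DecidableRel H.Adj]

def coloursInto [DecidableEq κ] (D : Finset V) (φ : Sym2 V → κ) (x : V) : Finset κ :=
  (H.neighborFinset x ∩ D).image fun y => φ s(x, y)

def freeColours [DecidableEq κ] (C : Finset κ) (L : V → Finset κ) (D : Finset V)
    (φ : Sym2 V → κ) (u v : V) : Finset κ :=
  C \ (L u ∪ L v ∪ H.coloursInto D φ u ∪ H.coloursInto D φ v)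

variable {H} {D : Finset V}

theorem edgesMeeting_insert_subset (u : V) :
    H.edgesMeeting (insert u D) ⊆
      H.edgesMeeting D ∪ Set.range fun v : ↥(H.neighborFinset u \ D) => s(u, ↑v) := by
  rintro e ⟨he, x, hx, hxe⟩
  obtain rfl | hxD := mem_insert.1 hx
  · obtain ⟨v, rfl⟩ := Sym2.mem_iff_exists.1 hxe
    by_cases hvD : v ∈ D
    · exact Or.inl ⟨he, v, hvD, Sym2.mem_mk_right _ _⟩
    · exact Or.inr ⟨⟨v, mem_sdiff.2 ⟨(mem_neighborFinset _ _ _).2 he, hvD⟩⟩, rfl⟩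
  · exact Or.inl ⟨he, x, hxD, hxe⟩

variable [DecidableEq κ] {C : Finset κ} {L : V → Finset κ} {φ : Sym2 V → κ}

theorem card_coloursInto_le (x : V) :
    #(H.coloursInto D φ x) ≤ #(H.neighborFinset x ∩ D) :=
  card_image_le

theorem mem_coloursInto {x : V} (hx : x ∉ D) {e : Sym2 V} (he : e ∈ H.edgesMeeting D)
    (hxe : x ∈ e) : φ e ∈ H.coloursInto D φ x := by
  obtain ⟨hadj, y, hyD, hye⟩ := he
  obtain ⟨z, rfl⟩ := Sym2.mem_iff_exists.1 hxe
  obtain rfl | rfl := Sym2.mem_iff.1 hye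
  · exact absurd hyD hx
  · exact mem_image.2 ⟨y, mem_inter.2 ⟨(mem_neighborFinset _ _ _).2 hadj, hyD⟩, rfl⟩

-- Each `d ∈ D` has at most one edge of colour `c`.
theorem card_filter_mem_coloursInto_le (hφ : IsListColouringOn C L (H.edgesMeeting D) φ)
    (c : κ) (W : Finset V) : #{w ∈ W | c ∈ H.coloursInto D φ w} ≤ #D := by
  refine card_le_card_of_forall_subsingleton (fun w d => H.Adj w d ∧ φ s(w, d) = c)
    (fun w hw => ?_) (fun d hd w hw w' hw' => ?_)
  · obtain ⟨d, hd, rfl⟩ := mem_image.1 (mem_filter.1 hw).2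
    obtain ⟨hadj, hdD⟩ := mem_inter.1 hd
    exact ⟨d, hdD, (mem_neighborFinset _ _ _).1 hadj, rfl⟩
  · obtain ⟨-, hwd, hwc⟩ := hw
    obtain ⟨-, hw'd, hw'c⟩ := hw'
    by_contra hne
    refine hφ.proper s(d, w) ⟨hwd.symm, d, hd, Sym2.mem_mk_left _ _⟩
      s(d, w') ⟨hw'd.symm, d, hd, Sym2.mem_mk_left _ _⟩ (fun h => hne (Sym2.congr_right.1 h))
      d (Sym2.mem_mk_left _ _) (Sym2.mem_mk_left _ _) ?_
    rw [Sym2.eq_swap, hwc, Sym2.eq_swap, hw'c]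

theorem card_sdiff_neighborFinset_le {u : V} (hdeg : H.degree u ≤ #C - #(L u)) :
    #(H.neighborFinset u \ D) ≤ #(C \ (L u ∪ H.coloursInto D φ u)) := by
  have hsplit := card_sdiff_add_card_inter (H.neighborFinset u) D
  have hused := card_coloursInto_le (H := H) (D := D) (φ := φ) u
  have hC := le_card_sdiff (L u ∪ H.coloursInto D φ u) C
  have hunion := card_union_le (L u) (H.coloursInto D φ u)
  rw [card_neighborFinset_eq_degree] at hsplit
  omega

theorem card_freeColours_ge {r : ℝ} (hL : ∀ w, (#(L w) : ℝ) ≤ r) (hD : #D ≤ r) (u v : V) :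
    (#C : ℝ) - 4 * r ≤ #(H.freeColours C L D φ u v) := by
  have hused : ∀ x, (#(H.coloursInto D φ x) : ℝ) ≤ r := fun x =>
    le_trans (by exact_mod_cast (card_coloursInto_le x).trans (card_le_card inter_subset_right)) hD
  have h₁ := card_union_le (L u ∪ L v ∪ H.coloursInto D φ u) (H.coloursInto D φ v)
  have h₂ := card_union_le (L u ∪ L v) (H.coloursInto D φ u)
  have h₃ := card_union_le (L u) (L v)
  have h₄ := card_le_card_sdiff_add_card (s := C)
    (t := L u ∪ L v ∪ H.coloursInto D φ u ∪ H.coloursInto D φ v)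
  have : (#C : ℝ) ≤ #(H.freeColours C L D φ u v) + #(L u) + #(L v) + #(H.coloursInto D φ u) +
      #(H.coloursInto D φ v) := by
    exact_mod_cast (show #C ≤ _ by unfold freeColours; omega)
  linarith [hL u, hL v, hused u, hused v]

theorem card_filter_notMem_freeColours_le (hφ : IsListColouringOn C L (H.edgesMeeting D) φ)
    {r : ℝ} (hfreq : ∀ c ∈ C, (#{w | c ∈ L w} : ℝ) ≤ r) (hD : #D ≤ r) {u : V} {c : κ}
    (hc : c ∈ C \ (L u ∪ H.coloursInto D φ u)) (T : Finset V) :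
    (#{w ∈ T | c ∉ H.freeColours C L D φ u w} : ℝ) ≤ 2 * r := by
  have hcover : {w ∈ T | c ∉ H.freeColours C L D φ u w} ⊆
      ({w | c ∈ L w} : Finset V) ∪ {w ∈ T | c ∈ H.coloursInto D φ w} := by
    intro w hw
    simp only [freeColours, mem_filter, mem_sdiff, mem_union, mem_univ, true_and] at hw hc ⊢
    tauto
  have := (card_le_card hcover).trans (card_union_le _ _)
  have hlist := hfreq c (mem_sdiff.1 hc).1
  have hcol := card_filter_mem_coloursInto_le hφ c T
  have : (#{w ∈ T | c ∉ H.freeColours C L D φ u w} : ℝ) ≤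
      #{w | c ∈ L w} + #{w ∈ T | c ∈ H.coloursInto D φ w} := by exact_mod_cast this
  have : (#{w ∈ T | c ∈ H.coloursInto D φ w} : ℝ) ≤ #D := by exact_mod_cast hcol
  linarith

theorem card_filter_notMem_freeColours_le_card (hφ : IsListColouringOn C L (H.edgesMeeting D) φ)
    {r : ℝ} (hC : 7 * r ≤ #C) (hL : ∀ w, (#(L w) : ℝ) ≤ r)
    (hfreq : ∀ c ∈ C, (#{w | c ∈ L w} : ℝ) ≤ r) (hD : #D ≤ r) {u : V} {c : κ}
    (hc : c ∈ C \ (L u ∪ H.coloursInto D φ u)) (T : Finset V) (v : V) :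
    #{w ∈ T | c ∉ H.freeColours C L D φ u w} ≤ #(H.freeColours C L D φ u v) := by
  have hr : 0 ≤ r := (Nat.cast_nonneg _).trans hD
  have hmiss := card_filter_notMem_freeColours_le hφ hfreq hD hc T
  have hfree := card_freeColours_ge (H := H) (C := C) (φ := φ) hL hD u v
  exact_mod_cast (by linarith : (#{w ∈ T | c ∉ H.freeColours C L D φ u w} : ℝ) ≤
    #(H.freeColours C L D φ u v))

theorem exists_isListColouringOn_edgesMeeting_insert {r : ℝ} (hC : 7 * r ≤ #C)
    (hdeg : ∀ w, H.degree w ≤ #C - #(L w)) (hL : ∀ w, (#(L w) : ℝ) ≤ r)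
    (hfreq : ∀ c ∈ C, (#{w | c ∈ L w} : ℝ) ≤ r) (hD : #D ≤ r) {u : V} (hu : u ∉ D)
    (hφ : IsListColouringOn C L (H.edgesMeeting D) φ) :
    ∃ ψ, IsListColouringOn C L (H.edgesMeeting (insert u D)) ψ := by
  obtain ⟨f, hf, hfree⟩ := exists_injective_mem_of_card_filter_notMem_le
    (A := H.freeColours C L D φ u) (card_sdiff_neighborFinset_le (hdeg u)) fun c hc v _ =>
      card_filter_notMem_freeColours_le_card hφ hC hL hfreq hD hc _ v
  have hT (v : ↥(H.neighborFinset u \ D)) : ↑v ∉ D := (mem_sdiff.1 v.2).2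
  refine ⟨updateStar φ u _ f, (hφ.updateStar ?_ hf (fun v => ?_) ?_).mono
    (edgesMeeting_insert_subset u)⟩
  · rintro v ⟨-, x, hxD, hx⟩
    obtain rfl | rfl := Sym2.mem_iff.1 hx
    exacts [hu hxD, hT v hxD]
  · have := hfree v
    simp only [freeColours, mem_sdiff, mem_union] at this ⊢
    tauto
  · rintro v e he hx hfe
    have := hfree v
    simp only [freeColours, mem_sdiff, mem_union, hfe] at this
    rcases hx with hx | hx
    exacts [this.2 (Or.inl (Or.inr (mem_coloursInto hu he hx))),
      this.2 (Or.inr (mem_coloursInto (hT v) he hx))]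

theorem exists_isListColouringOn_edgesMeeting [Nonempty κ] {r : ℝ} (hC : 7 * r ≤ #C)
    (hdeg : ∀ w, H.degree w ≤ #C - #(L w)) (hL : ∀ w, (#(L w) : ℝ) ≤ r)
    (hfreq : ∀ c ∈ C, (#{w | c ∈ L w} : ℝ) ≤ r) (D : Finset V) (hD : #D ≤ r) :
    ∃ φ, IsListColouringOn C L (H.edgesMeeting D) φ := by
  induction D using Finset.induction_on with
  | empty => exact ⟨fun _ => Classical.arbitrary κ, by rw [edgesMeeting_empty]; exact .empty⟩
  | insert u D hu ih =>
    have hD' : (#D : ℝ) ≤ r := le_trans (by exact_mod_cast card_le_card (subset_insert u D)) hD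
    obtain ⟨φ, hφ⟩ := ih hD'
    exact exists_isListColouringOn_edgesMeeting_insert hC hdeg hL hfreq hD' hu hφ

end SimpleGraph

theorem hall_based_finishing_general
    (δ : ℝ)
    (n : ℕ) (H : SimpleGraph (Fin n)) [DecidableRel H.Adj]
    (C : Finset ℕ) (Cw : Fin n → Finset ℕ)
    (hC : 7 * δ * n ≤ (C.card : ℝ))
    -- (i)
    (hdeg : ∀ w, H.degree w ≤ C.card - (Cw w).card)
    -- (ii)
    (hdom : ∃ U : Finset (Fin n), (U.card : ℝ) ≤ δ * n ∧
      ∀ u v, H.Adj u v → u ∈ U ∨ v ∈ U)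
    -- (iii)
    (hlist : ∀ w, ((Cw w).card : ℝ) ≤ δ * n)
    -- (iv)
    (hfreq : ∀ c ∈ C, ((Finset.univ.filter fun w => c ∈ Cw w).card : ℝ) ≤ δ * n) :
    ∃ φ : Sym2 (Fin n) → ℕ,
      (∀ u v, H.Adj u v → φ s(u, v) ∈ C) ∧
      (∀ u v w, H.Adj u v → H.Adj u w → v ≠ w → φ s(u, v) ≠ φ s(u, w)) ∧
      (∀ u v, H.Adj u v → φ s(u, v) ∉ Cw u ∪ Cw v) := by
  obtain ⟨U, hU, hcover⟩ := hdom
  obtain ⟨φ, hφ⟩ := H.exists_isListColouringOn_edgesMeeting (r := δ * n) (by linarith) hdeg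
    hlist hfreq U hU
  replace hφ := hφ.mono (H.edgeSet_subset_edgesMeeting hcover)
  have hcol {u v} (h : H.Adj u v) (x) (hx : x ∈ s(u, v)) : φ s(u, v) ∈ C \ Cw x :=
    hφ.mem_sdiff _ h x hx
  refine ⟨φ, fun u v h => (mem_sdiff.1 (hcol h u (Sym2.mem_mk_left u v))).1,
    fun u v w huv huw hvw => hφ.proper _ huv _ huw (fun h => hvw (Sym2.congr_right.1 h))
      u (Sym2.mem_mk_left u v) (Sym2.mem_mk_left u w),
    fun u v h => ?_⟩
  rw [mem_union, not_or]
  exact ⟨(mem_sdiff.1 (hcol h u (Sym2.mem_mk_left u v))).2,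
    (mem_sdiff.1 (hcol h v (Sym2.mem_mk_right u v))).2⟩

/-- List edge-colouring of a graph dominated by a small vertex set: given a colour set `C` and
forbidden lists `Cw w ⊆ C` with the stated degree, domination and frequency conditions, there
is a proper edge-colouring of `H` with colours from `C` avoiding the forbidden lists at both
endpoints of each edge. -/
theorem hall_based_finishing
    (δ : ℝ) (hδ0 : 0 < δ) (hδ1 : δ < 1)
    (n : ℕ) (H : SimpleGraph (Fin n)) [DecidableRel H.Adj]
    (C : Finset ℕ) (Cw : Fin n → Finset ℕ)
    (hCsub : ∀ w, Cw w ⊆ C)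
    (hC : 7 * δ * n ≤ (C.card : ℝ))
    -- (i)
    (hdeg : ∀ w, H.degree w ≤ C.card - (Cw w).card)
    -- (ii)
    (hdom : ∃ U : Finset (Fin n), (U.card : ℝ) ≤ δ * n ∧
      ∀ u v, H.Adj u v → u ∈ U ∨ v ∈ U)
    -- (iii)
    (hlist : ∀ w, ((Cw w).card : ℝ) ≤ δ * n)
    -- (iv)
    (hfreq : ∀ c ∈ C, ((Finset.univ.filter fun w => c ∈ Cw w).card : ℝ) ≤ δ * n) :
    ∃ φ : Sym2 (Fin n) → ℕ,
      (∀ u v, H.Adj u v → φ s(u, v) ∈ C) ∧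
      (∀ u v w, H.Adj u v → H.Adj u w → v ≠ w → φ s(u, v) ≠ φ s(u, w)) ∧
      (∀ u v, H.Adj u v → φ s(u, v) ∉ Cw u ∪ Cw v) :=
  hall_based_finishing_general δ n H C Cw hC hdeg hdom hlist hfreq
end
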